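/- arXiv:math/0502205 — 6 statements merged into one kernel-verified Lean document; each statement's English description precedes it below -/
import Mathlib

section
/- If F = {f_n} is a frame for a Hilbert space H with frame bounds A, B, and E = {e_n} is a sequence in H such that R := Σ_n ‖e_n − f_n‖² < A, then E is a frame for H with frame bounds A(1 − √(R/A))² and B(1 + √(R/B))². -/
/-!
Write `⟪f, e_n⟫ = ⟪f, f_n⟫ + ⟪f, e_n - f_n⟫`. By the triangle inequality in `ℓ²`, the root square
sum `√(∑ |⟪f, e_n⟫|²)` differs from `√(∑ |⟪f, f_n⟫|²) ∈ [√A ‖f‖, √B ‖f‖]` by at most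
`√(∑ |⟪f, e_n - f_n⟫|²)`, which Cauchy–Schwarz bounds by `√R ‖f‖`. Hence
`(√A - √R) ‖f‖ ≤ √(∑ |⟪f, e_n⟫|²) ≤ (√B + √R) ‖f‖`, and `√R < √A` lets the lower bound be squared.
-/

open scoped InnerProductSpace

section SquareSummable

variable {ι E : Type*} [NormedAddCommGroup E] {a b : ι → E}

theorem Memℓp.two_of_summable_norm_sq (ha : Summable fun i => ‖a i‖ ^ 2) : Memℓp a 2 :=
  memℓp_gen (by simpa using ha)

theorem lp.norm_two_eq_sqrt_tsum (x : lp (fun _ : ι => E) 2) :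
    ‖x‖ = √(∑' i, ‖x i‖ ^ 2) := by
  rw [lp.norm_eq_tsum_rpow (by norm_num) x, Real.sqrt_eq_rpow]
  norm_num

theorem sqrt_tsum_norm_add_sq_le (ha : Summable fun i => ‖a i‖ ^ 2)
    (hb : Summable fun i => ‖b i‖ ^ 2) :
    √(∑' i, ‖a i + b i‖ ^ 2) ≤ √(∑' i, ‖a i‖ ^ 2) + √(∑' i, ‖b i‖ ^ 2) := by
  let x : lp (fun _ : ι => E) 2 := ⟨a, .two_of_summable_norm_sq ha⟩
  let y : lp (fun _ : ι => E) 2 := ⟨b, .two_of_summable_norm_sq hb⟩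
  have h := norm_add_le x y
  simp only [lp.norm_two_eq_sqrt_tsum] at h
  exact h

theorem sqrt_tsum_norm_sq_sub_le (ha : Summable fun i => ‖a i‖ ^ 2)
    (hb : Summable fun i => ‖b i‖ ^ 2) :
    √(∑' i, ‖a i‖ ^ 2) - √(∑' i, ‖b i‖ ^ 2) ≤ √(∑' i, ‖a i + b i‖ ^ 2) := by
  let x : lp (fun _ : ι => E) 2 := ⟨a, .two_of_summable_norm_sq ha⟩
  let y : lp (fun _ : ι => E) 2 := ⟨b, .two_of_summable_norm_sq hb⟩
  have h := norm_sub_norm_le x (-y)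
  simp only [lp.norm_two_eq_sqrt_tsum, norm_neg, sub_neg_eq_add] at h
  exact h

variable {A B R t : ℝ}

theorem sqrt_sub_sqrt_sq_mul_le_tsum_norm_add_sq (ha : Summable fun i => ‖a i‖ ^ 2)
    (hb : Summable fun i => ‖b i‖ ^ 2) (hR : 0 ≤ R) (hRA : R ≤ A) (ht : 0 ≤ t)
    (hlow : A * t ^ 2 ≤ ∑' i, ‖a i‖ ^ 2) (hbR : ∑' i, ‖b i‖ ^ 2 ≤ R * t ^ 2) :
    (√A - √R) ^ 2 * t ^ 2 ≤ ∑' i, ‖a i + b i‖ ^ 2 := by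
  have hAR : √R ≤ √A := Real.sqrt_le_sqrt hRA
  have ha_ge : √A * t ≤ √(∑' i, ‖a i‖ ^ 2) :=
    (Real.le_sqrt (by positivity) (tsum_nonneg fun i => by positivity)).2
      (by rwa [mul_pow, Real.sq_sqrt (hR.trans hRA)])
  have hb_le : √(∑' i, ‖b i‖ ^ 2) ≤ √R * t :=
    (Real.sqrt_le_left (by positivity)).2 (by rwa [mul_pow, Real.sq_sqrt hR])
  rw [← mul_pow]
  refine (Real.le_sqrt (mul_nonneg (sub_nonneg.2 hAR) ht)
    (tsum_nonneg fun i => by positivity)).1 ?_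
  calc (√A - √R) * t = √A * t - √R * t := sub_mul _ _ _
    _ ≤ _ := sub_le_sub ha_ge hb_le
    _ ≤ _ := sqrt_tsum_norm_sq_sub_le ha hb

theorem tsum_norm_add_sq_le_sqrt_add_sqrt_sq_mul (ha : Summable fun i => ‖a i‖ ^ 2)
    (hb : Summable fun i => ‖b i‖ ^ 2) (hB : 0 ≤ B) (hR : 0 ≤ R) (ht : 0 ≤ t)
    (hup : ∑' i, ‖a i‖ ^ 2 ≤ B * t ^ 2) (hbR : ∑' i, ‖b i‖ ^ 2 ≤ R * t ^ 2) :
    ∑' i, ‖a i + b i‖ ^ 2 ≤ (√B + √R) ^ 2 * t ^ 2 := by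
  have ha_le : √(∑' i, ‖a i‖ ^ 2) ≤ √B * t :=
    (Real.sqrt_le_left (by positivity)).2 (by rwa [mul_pow, Real.sq_sqrt hB])
  have hb_le : √(∑' i, ‖b i‖ ^ 2) ≤ √R * t :=
    (Real.sqrt_le_left (by positivity)).2 (by rwa [mul_pow, Real.sq_sqrt hR])
  rw [← mul_pow]
  refine (Real.sqrt_le_left (by positivity)).1 ?_
  calc _ ≤ _ := sqrt_tsum_norm_add_sq_le ha hb
    _ ≤ √B * t + √R * t := add_le_add ha_le hb_le
    _ = (√B + √R) * t := (add_mul _ _ _).symm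

end SquareSummable

section InnerSquareSums

variable {𝕜 E ι : Type*} [RCLike 𝕜] [NormedAddCommGroup E] [InnerProductSpace 𝕜 E]
  (f : E) {D : ι → E}

theorem norm_inner_sq_le_norm_sq_mul (x : E) : ‖⟪f, x⟫_𝕜‖ ^ 2 ≤ ‖f‖ ^ 2 * ‖x‖ ^ 2 := by
  rw [← mul_pow]
  exact pow_le_pow_left₀ (norm_nonneg _) (norm_inner_le_norm f x) 2

theorem summable_norm_inner_sq (hD : Summable fun n => ‖D n‖ ^ 2) :
    Summable fun n => ‖⟪f, D n⟫_𝕜‖ ^ 2 :=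
  .of_nonneg_of_le (fun _ => by positivity) (fun n => norm_inner_sq_le_norm_sq_mul f (D n))
    (hD.mul_left _)

theorem tsum_norm_inner_sq_le (hD : Summable fun n => ‖D n‖ ^ 2) :
    ∑' n, ‖⟪f, D n⟫_𝕜‖ ^ 2 ≤ ‖f‖ ^ 2 * ∑' n, ‖D n‖ ^ 2 := by
  rw [← tsum_mul_left]
  exact (summable_norm_inner_sq f hD).tsum_le_tsum (fun n => norm_inner_sq_le_norm_sq_mul f (D n))
    (hD.mul_left _)

end InnerSquareSums

theorem Real.mul_one_sub_sqrt_div_sq {A : ℝ} (hA : 0 < A) (R : ℝ) :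
    A * (1 - √(R / A)) ^ 2 = (√A - √R) ^ 2 := by
  rw [Real.sqrt_div' R hA.le, ← Real.sq_sqrt hA.le, ← mul_pow, Real.sq_sqrt hA.le]
  field_simp

theorem Real.mul_one_add_sqrt_div_sq {B : ℝ} (hB : 0 < B) (R : ℝ) :
    B * (1 + √(R / B)) ^ 2 = (√B + √R) ^ 2 := by
  rw [Real.sqrt_div' R hB.le, ← Real.sq_sqrt hB.le, ← mul_pow, Real.sq_sqrt hB.le]
  field_simp

theorem stmt_0_general {H : Type*} [NormedAddCommGroup H] [InnerProductSpace ℂ H]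
    (F E : ℤ → H) (A B R : ℝ) (hA : 0 < A)
    (hframe : ∀ f : H,
      A * ‖f‖ ^ 2 ≤ ∑' n : ℤ, ‖(inner ℂ f (F n) : ℂ)‖ ^ 2 ∧
      ∑' n : ℤ, ‖(inner ℂ f (F n) : ℂ)‖ ^ 2 ≤ B * ‖f‖ ^ 2)
    (hsum : Summable fun n : ℤ => ‖E n - F n‖ ^ 2)
    (hR : R = ∑' n : ℤ, ‖E n - F n‖ ^ 2) (hRA : R < A) :
    ∀ f : H,
      A * (1 - Real.sqrt (R / A)) ^ 2 * ‖f‖ ^ 2 ≤ ∑' n : ℤ, ‖(inner ℂ f (E n) : ℂ)‖ ^ 2 ∧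
      ∑' n : ℤ, ‖(inner ℂ f (E n) : ℂ)‖ ^ 2 ≤ B * (1 + Real.sqrt (R / B)) ^ 2 * ‖f‖ ^ 2 := by
  intro f
  rcases eq_or_ne f 0 with rfl | hf
  · simp
  obtain ⟨hlow, hup⟩ := hframe f
  have hf2 : 0 < ‖f‖ ^ 2 := by positivity
  have hB : 0 < B := hA.trans_le (le_of_mul_le_mul_right (hlow.trans hup) hf2)
  have hF : Summable fun n => ‖⟪f, F n⟫_ℂ‖ ^ 2 := by
    by_contra h
    rw [tsum_eq_zero_of_not_summable h] at hlow
    exact hlow.not_gt (by positivity)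
  have hD := summable_norm_inner_sq (𝕜 := ℂ) f hsum
  have hsplit : ∀ n, ⟪f, E n⟫_ℂ = ⟪f, F n⟫_ℂ + ⟪f, E n - F n⟫_ℂ := fun n => by
    rw [inner_sub_right, add_sub_cancel]
  have hR0 : 0 ≤ R := hR ▸ tsum_nonneg fun n => by positivity
  have hDR : ∑' n, ‖⟪f, E n - F n⟫_ℂ‖ ^ 2 ≤ R * ‖f‖ ^ 2 := by
    rw [mul_comm, hR]
    exact tsum_norm_inner_sq_le f hsum
  simp only [hsplit]
  rw [Real.mul_one_sub_sqrt_div_sq hA, Real.mul_one_add_sqrt_div_sq hB]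
  exact ⟨sqrt_sub_sqrt_sq_mul_le_tsum_norm_add_sq hF hD hR0 hRA.le (norm_nonneg f) hlow hDR,
    tsum_norm_add_sq_le_sqrt_add_sqrt_sq_mul hF hD hB.le hR0 (norm_nonneg f) hup hDR⟩

/-- Christensen's quadratic perturbation theorem. -/
theorem stmt_0 {H : Type*} [NormedAddCommGroup H] [InnerProductSpace ℂ H] [CompleteSpace H]
    (F E : ℤ → H) (A B R : ℝ) (hA : 0 < A) (hAB : A ≤ B)
    (hframe : ∀ f : H,
      A * ‖f‖ ^ 2 ≤ ∑' n : ℤ, ‖(inner ℂ f (F n) : ℂ)‖ ^ 2 ∧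
      ∑' n : ℤ, ‖(inner ℂ f (F n) : ℂ)‖ ^ 2 ≤ B * ‖f‖ ^ 2)
    (hsum : Summable fun n : ℤ => ‖E n - F n‖ ^ 2)
    (hR : R = ∑' n : ℤ, ‖E n - F n‖ ^ 2) (hRA : R < A) :
    ∀ f : H,
      A * (1 - Real.sqrt (R / A)) ^ 2 * ‖f‖ ^ 2 ≤ ∑' n : ℤ, ‖(inner ℂ f (E n) : ℂ)‖ ^ 2 ∧
      ∑' n : ℤ, ‖(inner ℂ f (E n) : ℂ)‖ ^ 2 ≤ B * (1 + Real.sqrt (R / B)) ^ 2 * ‖f‖ ^ 2 :=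
  stmt_0_general F E A B R hA hframe hsum hR hRA
end

section
/- Let F = {f_n} be a frame for H with bounds A, B, and let E = {e_n} be a sequence in H. Suppose there exist constants λ, μ ≥ 0 with λ + μ/√A < 1 such that for every finite set F₀ ⊂ ℤ and scalars (c_n)_{n∈F₀}, ‖Σ_{n∈F₀} c_n (e_n − f_n)‖ ≤ λ‖Σ_{n∈F₀} c_n f_n‖ + μ(Σ_{n∈F₀} |c_n|²)^{1/2}. Then E is a frame for H with bounds A(1 − (λ + μ/√A))² and B(1 + λ + μ/√B)². -/
/-!
Upper bound: on finite sums, the upper frame bound `B` of `F` is equivalent to the synthesis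
bound `‖∑ cₙ fₙ‖ ≤ √B ‖c‖₂`, so the perturbation hypothesis gives
`‖∑ cₙ eₙ‖ ≤ ((1 + λ) √B + μ) ‖c‖₂`, which is in turn equivalent to the upper frame bound
`B (1 + λ + μ/√B)²` for `E`.

Lower bound: rather than inverting the frame operator, use the lower frame bound to see that the
support function of the convex set of finite combinations `∑ cₙ fₙ` with `‖c‖₂ ≤ ‖x‖/√A` is at
least `‖x‖ ‖g‖ ≥ re ⟪g, x⟫` in every direction `g`, so that `x` lies in the closure of this set.
For such a combination `w`, splitting `‖x‖² = re ⟪x, ∑ cₙ eₙ⟫ + re ⟪x, x - ∑ cₙ eₙ⟫` and using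
Cauchy–Schwarz and the perturbation hypothesis gives
`‖x‖² ≤ ‖c‖₂ √T + ‖x‖ (‖x - w‖ + λ ‖w‖ + μ ‖c‖₂)` with `T = ∑ |⟪x, eₙ⟫|²`; letting `w → x`
yields `√A (1 - λ - μ/√A) ‖x‖ ≤ √T`.
-/

open Finset RCLike
open scoped InnerProductSpace

section RealHilbert

variable {H : Type*} [NormedAddCommGroup H] [InnerProductSpace ℝ H] [CompleteSpace H]

theorem mem_closure_of_forall_inner_le {K : Set H} (hK : Convex ℝ K) (hne : K.Nonempty) {x : H}
    (h : ∀ g X, (∀ w ∈ K, ⟪g, w⟫_ℝ ≤ X) → ⟪g, x⟫_ℝ ≤ X) : x ∈ closure K := by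
  obtain ⟨v, hv, hmin⟩ := exists_norm_eq_iInf_of_complete_convex hne.closure
    isClosed_closure.isComplete hK.closure x
  have hsep := (norm_eq_iInf_iff_real_inner_le_zero hK.closure hv).1 hmin
  have hxv : ⟪x - v, x⟫_ℝ ≤ ⟪x - v, v⟫_ℝ := h _ _ fun w hw => by
    simpa [inner_sub_right] using hsep w (subset_closure hw)
  have hdist : ‖x - v‖ ^ 2 ≤ 0 := by
    rw [← real_inner_self_eq_norm_sq, inner_sub_right]
    linarith
  obtain rfl : x = v := by simpa [sub_eq_zero] using hdist
  exact hv

end RealHilbert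

section FiniteSums

variable {𝕜 ι H : Type*} [RCLike 𝕜] [NormedAddCommGroup H] [InnerProductSpace 𝕜 H]

theorem re_inner_sum_smul_le (f : ι → H) (s : Finset ι) (c : ι → 𝕜) (g : H) :
    re ⟪g, ∑ n ∈ s, c n • f n⟫_𝕜 ≤
      √(∑ n ∈ s, ‖c n‖ ^ 2) * √(∑ n ∈ s, ‖⟪g, f n⟫_𝕜‖ ^ 2) :=
  calc re ⟪g, ∑ n ∈ s, c n • f n⟫_𝕜 ≤ ‖∑ n ∈ s, c n * ⟪g, f n⟫_𝕜‖ := by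
        simpa only [inner_sum, inner_smul_right] using re_le_norm (K := 𝕜) _
    _ ≤ ∑ n ∈ s, ‖c n‖ * ‖⟪g, f n⟫_𝕜‖ := by
        simpa only [norm_mul] using norm_sum_le s fun n => c n * ⟪g, f n⟫_𝕜
    _ ≤ _ := Real.sum_mul_le_sqrt_mul_sqrt _ _ _

theorem inner_sum_inner_smul (f : ι → H) (s : Finset ι) (g : H) :
    ⟪g, ∑ n ∈ s, ⟪f n, g⟫_𝕜 • f n⟫_𝕜 = ((∑ n ∈ s, ‖⟪g, f n⟫_𝕜‖ ^ 2 : ℝ) : 𝕜) := by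
  simp only [inner_sum, inner_smul_right, ofReal_sum, ofReal_pow]
  refine sum_congr rfl fun n _ => ?_
  rw [← inner_conj_symm (f n) g, RCLike.conj_mul]

theorem norm_sum_smul_le_of_sum_norm_inner_sq_le {f : ι → H} {B : ℝ}
    (hB : ∀ g s, ∑ n ∈ s, ‖⟪g, f n⟫_𝕜‖ ^ 2 ≤ B * ‖g‖ ^ 2) (s : Finset ι) (c : ι → 𝕜) :
    ‖∑ n ∈ s, c n • f n‖ ≤ √B * √(∑ n ∈ s, ‖c n‖ ^ 2) := by
  set x := ∑ n ∈ s, c n • f n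
  have hx : ‖x‖ ^ 2 ≤ (√B * √(∑ n ∈ s, ‖c n‖ ^ 2)) * ‖x‖ :=
    calc ‖x‖ ^ 2 = re ⟪x, x⟫_𝕜 := (inner_self_eq_norm_sq x).symm
      _ ≤ √(∑ n ∈ s, ‖c n‖ ^ 2) * √(B * ‖x‖ ^ 2) :=
        (re_inner_sum_smul_le f s c x).trans (by gcongr; exact hB x s)
      _ = _ := by rw [Real.sqrt_mul' _ (by positivity), Real.sqrt_sq (norm_nonneg x)]; ring
  nlinarith [norm_nonneg x, mul_nonneg (Real.sqrt_nonneg B) (Real.sqrt_nonneg (∑ n ∈ s, ‖c n‖ ^ 2))]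

theorem sum_norm_inner_sq_le_of_norm_sum_smul_le {f : ι → H} {C : ℝ}
    (hC : ∀ s (c : ι → 𝕜), ‖∑ n ∈ s, c n • f n‖ ≤ C * √(∑ n ∈ s, ‖c n‖ ^ 2))
    (g : H) (s : Finset ι) :
    ∑ n ∈ s, ‖⟪g, f n⟫_𝕜‖ ^ 2 ≤ C ^ 2 * ‖g‖ ^ 2 := by
  set S := ∑ n ∈ s, ‖⟪g, f n⟫_𝕜‖ ^ 2
  have hS : √S ^ 2 ≤ (C * ‖g‖) * √S :=
    calc √S ^ 2 = re ⟪g, ∑ n ∈ s, ⟪f n, g⟫_𝕜 • f n⟫_𝕜 := by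
          rw [inner_sum_inner_smul, ofReal_re, Real.sq_sqrt (by positivity)]
      _ ≤ ‖g‖ * ‖∑ n ∈ s, ⟪f n, g⟫_𝕜 • f n‖ := (re_le_norm _).trans (norm_inner_le_norm _ _)
      _ ≤ ‖g‖ * (C * √S) := by
          gcongr
          simpa only [norm_inner_symm] using hC s fun n => ⟪f n, g⟫_𝕜
      _ = _ := by ring
  have hS' : √S ≤ |C * ‖g‖| := by
    nlinarith [Real.sqrt_nonneg S, le_abs_self (C * ‖g‖), abs_nonneg (C * ‖g‖)]
  calc S = √S ^ 2 := (Real.sq_sqrt (by positivity)).symm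
    _ ≤ |C * ‖g‖| ^ 2 := by gcongr
    _ = C ^ 2 * ‖g‖ ^ 2 := by rw [sq_abs, mul_pow]

/-- A nonsummable series has sum `0` in Lean, which the lower frame bound excludes for `g ≠ 0`. -/
theorem summable_of_mul_norm_sq_le_tsum {f : ι → H} {A : ℝ} (hA : 0 < A)
    (hf : ∀ g : H, A * ‖g‖ ^ 2 ≤ ∑' n, ‖⟪g, f n⟫_𝕜‖ ^ 2) (g : H) :
    Summable fun n => ‖⟪g, f n⟫_𝕜‖ ^ 2 := by
  by_contra hns
  have hg := hf g
  rw [tsum_eq_zero_of_not_summable hns] at hg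
  have hg0 : ‖g‖ ^ 2 ≤ 0 := by nlinarith
  obtain rfl : g = 0 := by simpa using hg0
  simp at hns

theorem norm_sum_smul_le_of_perturbation {f e : ι → H} {B lam mu : ℝ} (hlam : 0 ≤ lam)
    (hf : ∀ s (c : ι → 𝕜), ‖∑ n ∈ s, c n • f n‖ ≤ √B * √(∑ n ∈ s, ‖c n‖ ^ 2))
    (hpert : ∀ s (c : ι → 𝕜), ‖∑ n ∈ s, c n • (e n - f n)‖ ≤
      lam * ‖∑ n ∈ s, c n • f n‖ + mu * √(∑ n ∈ s, ‖c n‖ ^ 2))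
    (s : Finset ι) (c : ι → 𝕜) :
    ‖∑ n ∈ s, c n • e n‖ ≤ ((1 + lam) * √B + mu) * √(∑ n ∈ s, ‖c n‖ ^ 2) := by
  have hsplit : ∑ n ∈ s, c n • e n = ∑ n ∈ s, c n • f n + ∑ n ∈ s, c n • (e n - f n) := by
    simp [smul_sub]
  have hF := mul_le_mul_of_nonneg_left (hf s c) (by linarith : 0 ≤ 1 + lam)
  rw [hsplit]
  linarith [norm_add_le (∑ n ∈ s, c n • f n) (∑ n ∈ s, c n • (e n - f n)), hpert s c]

theorem norm_sq_le_of_perturbation {f e : ι → H} {lam mu T : ℝ}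
    (hpert : ∀ s (c : ι → 𝕜), ‖∑ n ∈ s, c n • (e n - f n)‖ ≤
      lam * ‖∑ n ∈ s, c n • f n‖ + mu * √(∑ n ∈ s, ‖c n‖ ^ 2))
    {x : H} (hT : ∀ s, ∑ n ∈ s, ‖⟪x, e n⟫_𝕜‖ ^ 2 ≤ T) (s : Finset ι) (c : ι → 𝕜) :
    ‖x‖ ^ 2 ≤ √(∑ n ∈ s, ‖c n‖ ^ 2) * √T + ‖x‖ * (‖x - ∑ n ∈ s, c n • f n‖ +
      lam * ‖∑ n ∈ s, c n • f n‖ + mu * √(∑ n ∈ s, ‖c n‖ ^ 2)) := by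
  set w := ∑ n ∈ s, c n • f n
  have hsplit : x - ∑ n ∈ s, c n • e n = (x - w) - ∑ n ∈ s, c n • (e n - f n) := by
    simp [w, smul_sub]
  have hrest : ‖x - ∑ n ∈ s, c n • e n‖ ≤
      ‖x - w‖ + lam * ‖w‖ + mu * √(∑ n ∈ s, ‖c n‖ ^ 2) := by
    rw [hsplit]
    linarith [norm_sub_le (x - w) (∑ n ∈ s, c n • (e n - f n)), hpert s c]
  calc ‖x‖ ^ 2 = re ⟪x, ∑ n ∈ s, c n • e n⟫_𝕜 + re ⟪x, x - ∑ n ∈ s, c n • e n⟫_𝕜 := by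
        rw [← map_add, ← inner_add_right, add_sub_cancel, inner_self_eq_norm_sq]
    _ ≤ √(∑ n ∈ s, ‖c n‖ ^ 2) * √T + ‖x‖ * ‖x - ∑ n ∈ s, c n • e n‖ := by
        gcongr
        · exact (re_inner_sum_smul_le e s c x).trans (by gcongr; exact hT s)
        · exact (re_le_norm _).trans (norm_inner_le_norm _ _)
    _ ≤ _ := by gcongr

theorem convex_setOf_sum_norm_sq_le (s : Finset ι) (r : ℝ) :
    Convex ℝ {c : ι → 𝕜 | ∑ n ∈ s, ‖c n‖ ^ 2 ≤ r} := by
  intro c hc d hd a b ha hb hab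
  have hsq : ConvexOn ℝ Set.univ fun z : 𝕜 => ‖z‖ ^ 2 :=
    convexOn_univ_norm.pow (fun _ _ => norm_nonneg _) 2
  calc ∑ n ∈ s, ‖(a • c + b • d) n‖ ^ 2
      ≤ ∑ n ∈ s, (a * ‖c n‖ ^ 2 + b * ‖d n‖ ^ 2) :=
        sum_le_sum fun n _ => hsq.2 trivial trivial ha hb hab
    _ = a * ∑ n ∈ s, ‖c n‖ ^ 2 + b * ∑ n ∈ s, ‖d n‖ ^ 2 := by
        rw [sum_add_distrib, mul_sum, mul_sum]
    _ ≤ a * r + b * r := by gcongr <;> assumption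
    _ = r := by rw [← add_mul, hab, one_mul]

end FiniteSums

section Complex

variable {ι H : Type*} [NormedAddCommGroup H] [InnerProductSpace ℂ H]

def synthesisBall (f : ι → H) (ρ : ℝ) : Set H :=
  ⋃ s : Finset ι, (fun c : ι → ℂ => ∑ n ∈ s, c n • f n) '' {c | ∑ n ∈ s, ‖c n‖ ^ 2 ≤ ρ ^ 2}

theorem mem_synthesisBall {f : ι → H} {ρ : ℝ} {s : Finset ι} {c : ι → ℂ}
    (hc : ∑ n ∈ s, ‖c n‖ ^ 2 ≤ ρ ^ 2) : ∑ n ∈ s, c n • f n ∈ synthesisBall f ρ :=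
  Set.mem_iUnion.2 ⟨s, c, hc, rfl⟩

theorem zero_mem_synthesisBall (f : ι → H) (ρ : ℝ) : (0 : H) ∈ synthesisBall f ρ := by
  simpa using mem_synthesisBall (f := f) (s := ∅) (c := 0) (by simpa using sq_nonneg ρ)

theorem convex_synthesisBall (f : ι → H) (ρ : ℝ) : Convex ℝ (synthesisBall f ρ) := by
  classical
  refine Directed.convex_iUnion (Monotone.directed_le fun s t hst => ?_) fun s =>
    (convex_setOf_sum_norm_sq_le (𝕜 := ℂ) s _).is_linear_image ⟨fun c d => ?_, fun a c => ?_⟩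
  · rintro _ ⟨c, hc, rfl⟩
    refine ⟨fun n => if n ∈ s then c n else 0, ?_, ?_⟩
    · simpa [apply_ite, sum_ite_mem, inter_eq_right.2 hst] using hc
    · simp [ite_smul, sum_ite_mem, inter_eq_right.2 hst]
  · simp [add_smul, sum_add_distrib]
  · simp [smul_sum, mul_smul, Complex.coe_smul]

theorem exists_mem_synthesisBall_re_inner_eq (f : ι → H) (ρ : ℝ) (g : H) (s : Finset ι) :
    ∃ w ∈ synthesisBall f ρ, re ⟪g, w⟫_ℂ = ρ * √(∑ n ∈ s, ‖⟪g, f n⟫_ℂ‖ ^ 2) := by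
  set S := ∑ n ∈ s, ‖⟪g, f n⟫_ℂ‖ ^ 2
  have hS : 0 ≤ S := sum_nonneg fun _ _ => sq_nonneg _
  set t := ρ / √S
  refine ⟨∑ n ∈ s, ((t : ℂ) * ⟪f n, g⟫_ℂ) • f n, mem_synthesisBall ?_, ?_⟩
  · calc ∑ n ∈ s, ‖(t : ℂ) * ⟪f n, g⟫_ℂ‖ ^ 2 = ρ ^ 2 * (S / S) := by
          simp only [norm_mul, mul_pow, Complex.norm_real, Real.norm_eq_abs, sq_abs,
            norm_inner_symm, ← mul_sum, t, div_pow, Real.sq_sqrt hS]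
          ring
      _ ≤ ρ ^ 2 := mul_le_of_le_one_right (sq_nonneg ρ) (div_self_le_one S)
  · simp only [mul_smul, ← smul_sum, inner_smul_right, inner_sum_inner_smul]
    rw [re_to_complex, Complex.re_ofReal_mul, ← re_to_complex, ofReal_re, div_mul_eq_mul_div,
      mul_div_assoc, Real.div_sqrt]

theorem mem_closure_synthesisBall [CompleteSpace H] {f : ι → H} {A : ℝ} (hA : 0 < A)
    (hf : ∀ g : H, A * ‖g‖ ^ 2 ≤ ∑' n, ‖⟪g, f n⟫_ℂ‖ ^ 2) (x : H) :
    x ∈ closure (synthesisBall f (‖x‖ / √A)) := by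
  let := InnerProductSpace.complexToReal (G := H)
  set ρ := ‖x‖ / √A
  refine mem_closure_of_forall_inner_le (convex_synthesisBall f ρ)
    ⟨0, zero_mem_synthesisBall f ρ⟩ fun g X hX => ?_
  have hX0 : 0 ≤ X := by simpa using hX 0 (zero_mem_synthesisBall f ρ)
  have hsum : ρ ^ 2 * ∑' n, ‖⟪g, f n⟫_ℂ‖ ^ 2 ≤ X ^ 2 := by
    rw [← tsum_mul_left]
    refine Real.tsum_le_of_sum_le (fun n => by positivity) fun s => ?_
    obtain ⟨w, hw, hgw⟩ := exists_mem_synthesisBall_re_inner_eq f ρ g s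
    have hS : 0 ≤ ∑ n ∈ s, ‖⟪g, f n⟫_ℂ‖ ^ 2 := sum_nonneg fun _ _ => sq_nonneg _
    calc ∑ n ∈ s, ρ ^ 2 * ‖⟪g, f n⟫_ℂ‖ ^ 2 = (ρ * √(∑ n ∈ s, ‖⟪g, f n⟫_ℂ‖ ^ 2)) ^ 2 := by
          rw [mul_pow, Real.sq_sqrt hS, mul_sum]
      _ ≤ X ^ 2 := by
          gcongr
          exact hgw ▸ hX w hw
  have hxg : (‖x‖ * ‖g‖) ^ 2 ≤ X ^ 2 :=
    calc (‖x‖ * ‖g‖) ^ 2 = ρ ^ 2 * (A * ‖g‖ ^ 2) := by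
          rw [div_pow, Real.sq_sqrt hA.le]
          field_simp
      _ ≤ X ^ 2 := (mul_le_mul_of_nonneg_left (hf g) (sq_nonneg ρ)).trans hsum
  calc ⟪g, x⟫_ℝ ≤ ‖g‖ * ‖x‖ := real_inner_le_norm g x
    _ ≤ X := by
      rw [mul_comm]
      exact (pow_le_pow_iff_left₀ (by positivity) hX0 two_ne_zero).1 hxg

theorem mul_norm_sq_le_of_perturbation [CompleteSpace H] {f e : ι → H} {A lam mu T : ℝ}
    (hA : 0 < A) (hmu : 0 ≤ mu) (hsmall : lam + mu / √A < 1)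
    (hf : ∀ g : H, A * ‖g‖ ^ 2 ≤ ∑' n, ‖⟪g, f n⟫_ℂ‖ ^ 2)
    (hpert : ∀ s (c : ι → ℂ), ‖∑ n ∈ s, c n • (e n - f n)‖ ≤
      lam * ‖∑ n ∈ s, c n • f n‖ + mu * √(∑ n ∈ s, ‖c n‖ ^ 2))
    {x : H} (hT : ∀ s, ∑ n ∈ s, ‖⟪x, e n⟫_ℂ‖ ^ 2 ≤ T) :
    A * (1 - (lam + mu / √A)) ^ 2 * ‖x‖ ^ 2 ≤ T := by
  set ρ := ‖x‖ / √A
  have hbound : synthesisBall f ρ ⊆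
      {w | ‖x‖ ^ 2 ≤ ρ * √T + ‖x‖ * (‖x - w‖ + lam * ‖w‖ + mu * ρ)} := by
    rintro _ hw
    obtain ⟨s, c, hc, rfl⟩ := Set.mem_iUnion.1 hw
    have hcρ : √(∑ n ∈ s, ‖c n‖ ^ 2) ≤ ρ :=
      (Real.sqrt_le_sqrt hc).trans_eq (Real.sqrt_sq (by positivity))
    exact (norm_sq_le_of_perturbation hpert hT s c).trans (by gcongr)
  have hx := closure_minimal hbound (isClosed_le continuous_const (by fun_prop))
    (mem_closure_synthesisBall hA hf x)
  simp only [Set.mem_ofPred_eq, sub_self, norm_zero, zero_add] at hx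
  have hθ : 0 ≤ 1 - (lam + mu / √A) := by linarith
  have hsA : 0 < √A := Real.sqrt_pos.2 hA
  have hkey : √A * (1 - (lam + mu / √A)) * ‖x‖ ≤ √T := by
    rcases (norm_nonneg x).eq_or_lt with hx0 | hx0
    · rw [← hx0, mul_zero]
      positivity
    · refine le_of_mul_le_mul_left ?_ hx0
      have hlhs : ‖x‖ * (√A * (1 - (lam + mu / √A)) * ‖x‖) =
          √A * (‖x‖ ^ 2 - ‖x‖ * (lam * ‖x‖ + mu * ρ)) := by
        simp only [ρ]
        field_simp
      have hrhs : ‖x‖ * √T = √A * (ρ * √T) := by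
        simp only [ρ]
        field_simp
      rw [hlhs, hrhs]
      gcongr
      linarith
  calc A * (1 - (lam + mu / √A)) ^ 2 * ‖x‖ ^ 2 = (√A * (1 - (lam + mu / √A)) * ‖x‖) ^ 2 := by
        rw [mul_pow, mul_pow, Real.sq_sqrt hA.le]
    _ ≤ √T ^ 2 := by gcongr
    _ = T := Real.sq_sqrt ((sum_nonneg fun _ _ => sq_nonneg _).trans (hT ∅))

end Complex

/-- Casazza–Christensen perturbation theorem. -/
theorem stmt_1 {H : Type*} [NormedAddCommGroup H] [InnerProductSpace ℂ H] [CompleteSpace H]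
    (F E : ℤ → H) (A B lam mu : ℝ) (hA : 0 < A) (hAB : A ≤ B)
    (hframe : ∀ f : H,
      A * ‖f‖ ^ 2 ≤ ∑' n : ℤ, ‖(inner ℂ f (F n) : ℂ)‖ ^ 2 ∧
      ∑' n : ℤ, ‖(inner ℂ f (F n) : ℂ)‖ ^ 2 ≤ B * ‖f‖ ^ 2)
    (hlam : 0 ≤ lam) (hmu : 0 ≤ mu) (hsmall : lam + mu / Real.sqrt A < 1)
    (hpert : ∀ (F₀ : Finset ℤ) (c : ℤ → ℂ),
      ‖∑ n ∈ F₀, c n • (E n - F n)‖ ≤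
        lam * ‖∑ n ∈ F₀, c n • F n‖ + mu * Real.sqrt (∑ n ∈ F₀, ‖c n‖ ^ 2)) :
    ∀ f : H,
      A * (1 - (lam + mu / Real.sqrt A)) ^ 2 * ‖f‖ ^ 2 ≤
        ∑' n : ℤ, ‖(inner ℂ f (E n) : ℂ)‖ ^ 2 ∧
      ∑' n : ℤ, ‖(inner ℂ f (E n) : ℂ)‖ ^ 2 ≤
        B * (1 + lam + mu / Real.sqrt B) ^ 2 * ‖f‖ ^ 2 := by
  intro f
  have hlower : ∀ g : H, A * ‖g‖ ^ 2 ≤ ∑' n, ‖⟪g, F n⟫_ℂ‖ ^ 2 := fun g => (hframe g).1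
  have hFbessel : ∀ (g : H) s, ∑ n ∈ s, ‖⟪g, F n⟫_ℂ‖ ^ 2 ≤ B * ‖g‖ ^ 2 := fun g s =>
    ((summable_of_mul_norm_sq_le_tsum hA hlower g).sum_le_tsum s fun _ _ => sq_nonneg _).trans
      (hframe g).2
  have hEbessel := sum_norm_inner_sq_le_of_norm_sum_smul_le
    (norm_sum_smul_le_of_perturbation hlam (norm_sum_smul_le_of_sum_norm_inner_sq_le hFbessel)
      hpert) f
  have hEsum : Summable fun n => ‖⟪f, E n⟫_ℂ‖ ^ 2 :=
    summable_of_sum_le (fun _ => sq_nonneg _) hEbessel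
  refine ⟨mul_norm_sq_le_of_perturbation hA hmu hsmall hlower hpert fun s =>
    hEsum.sum_le_tsum s fun _ _ => sq_nonneg _, ?_⟩
  have hB : 0 < B := hA.trans_le hAB
  have hsB : 0 < √B := Real.sqrt_pos.2 hB
  calc ∑' n, ‖⟪f, E n⟫_ℂ‖ ^ 2 ≤ ((1 + lam) * √B + mu) ^ 2 * ‖f‖ ^ 2 :=
        hEsum.tsum_le_of_sum_le hEbessel
    _ = B * (1 + lam + mu / √B) ^ 2 * ‖f‖ ^ 2 := by
        field_simp
        rw [Real.sq_sqrt hB.le, mul_comm]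
end

section
/- The weighted Schur algebra A¹_s (matrices A = (a_{kl}) with ‖A‖ := max{sup_k Σ_l |a_{kl}|(1+|k−l|)^s, sup_l Σ_k |a_{kl}|(1+|k−l|)^s} < ∞, s ≥ 0) is closed under matrix multiplication, with ‖AB‖_{A¹_s} ≤ C‖A‖_{A¹_s}‖B‖_{A¹_s} for some constant C depending only on s. -/
/-!
Since `v_s(k - l) ≤ v_s(k - m) v_s(m - l)`, the weighted entries of `AB` are dominated by
`Σ_m (|a_{km}| v_s(k - m)) (|b_{ml}| v_s(m - l))`, and summing this nonnegative double series
first over `l` and then over `m` bounds each weighted row sum of `AB` by `‖A‖ ‖B‖`. Columns are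
rows of the transposes, and `(AB)ᵀ = BᵀAᵀ`; so `C = 1` works for every `s ≥ 0`.
-/

/-- The weight `v_s(k-l) = (1+|k-l|)^s`. -/
noncomputable def schurWeight (s : ℝ) (k l : ℤ) : ℝ := ((1 + |k - l| : ℤ) : ℝ) ^ s

noncomputable def tsumMatMul {ι R : Type*} [Semiring R] [TopologicalSpace R]
    (a b : ι → ι → R) (k l : ι) : R :=
  ∑' m, a k m * b m l

def WeightedRowSumsLE {ι R : Type*} [Norm R] (w : ι → ι → ℝ) (a : ι → ι → R) (N : ℝ) : Prop :=
  ∀ k, Summable (fun l => ‖a k l‖ * w k l) ∧ ∑' l, ‖a k l‖ * w k l ≤ N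

/-- For fixed `k`, a double series dominating row `k` of the weighted product `tsumMatMul a b`
when `w` is submultiplicative. -/
def rowMajorant {ι R : Type*} [Norm R] (w : ι → ι → ℝ) (a b : ι → ι → R) (k : ι) (p : ι × ι) :
    ℝ :=
  ‖a k p.1‖ * w k p.1 * (‖b p.1 p.2‖ * w p.1 p.2)

lemma rowMajorant_nonneg {ι R : Type*} [SeminormedAddGroup R] {w : ι → ι → ℝ}
    (hw : ∀ k l, 0 ≤ w k l) (a b : ι → ι → R) (k : ι) : 0 ≤ rowMajorant w a b k :=
  fun p => mul_nonneg (mul_nonneg (norm_nonneg _) (hw k p.1))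
    (mul_nonneg (norm_nonneg _) (hw p.1 p.2))

namespace WeightedRowSumsLE

variable {ι R : Type*} [SeminormedRing R] {w : ι → ι → ℝ} {a b : ι → ι → R} {Na Nb : ℝ}

lemma nonneg {N : ℝ} (h : WeightedRowSumsLE w a N)
    (hw : ∀ k l, 0 ≤ w k l) (k : ι) : 0 ≤ N :=
  (tsum_nonneg fun l => mul_nonneg (norm_nonneg _) (hw k l)).trans (h k).2

lemma summable_mul_tsum (ha : WeightedRowSumsLE w a Na) (hb : WeightedRowSumsLE w b Nb)
    (hw : ∀ k l, 0 ≤ w k l) (k : ι) :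
    Summable fun m => ‖a k m‖ * w k m * ∑' l, ‖b m l‖ * w m l :=
  ((ha k).1.mul_right Nb).of_nonneg_of_le
    (fun m => mul_nonneg (mul_nonneg (norm_nonneg _) (hw k m))
      (tsum_nonneg fun l => mul_nonneg (norm_nonneg _) (hw m l)))
    fun m => mul_le_mul_of_nonneg_left (hb m).2 (mul_nonneg (norm_nonneg _) (hw k m))

lemma summable_rowMajorant (ha : WeightedRowSumsLE w a Na) (hb : WeightedRowSumsLE w b Nb)
    (hw : ∀ k l, 0 ≤ w k l) (k : ι) : Summable (rowMajorant w a b k) := by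
  refine (summable_prod_of_nonneg (rowMajorant_nonneg hw a b k)).2
    ⟨fun m => (hb m).1.mul_left (‖a k m‖ * w k m), ?_⟩
  simpa only [rowMajorant, tsum_mul_left] using summable_mul_tsum ha hb hw k

lemma tsum_tsum_rowMajorant_le (ha : WeightedRowSumsLE w a Na) (hb : WeightedRowSumsLE w b Nb)
    (hw : ∀ k l, 0 ≤ w k l) (k : ι) :
    ∑' m, ∑' l, rowMajorant w a b k (m, l) ≤ Na * Nb :=
  calc ∑' m, ∑' l, rowMajorant w a b k (m, l)
      = ∑' m, ‖a k m‖ * w k m * ∑' l, ‖b m l‖ * w m l := by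
        simp only [rowMajorant, tsum_mul_left]
    _ ≤ ∑' m, ‖a k m‖ * w k m * Nb :=
        (summable_mul_tsum ha hb hw k).tsum_le_tsum
          (fun m => mul_le_mul_of_nonneg_left (hb m).2 (mul_nonneg (norm_nonneg _) (hw k m)))
          ((ha k).1.mul_right Nb)
    _ = (∑' m, ‖a k m‖ * w k m) * Nb := tsum_mul_right
    _ ≤ Na * Nb := mul_le_mul_of_nonneg_right (ha k).2 (hb.nonneg hw k)

lemma norm_tsumMatMul_mul_le (hw : ∀ k l, 0 < w k l) (hmul : ∀ k m l, w k l ≤ w k m * w m l)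
    {k l : ι} (hF : Summable fun m => rowMajorant w a b k (m, l)) :
    ‖tsumMatMul a b k l‖ * w k l ≤ ∑' m, rowMajorant w a b k (m, l) := by
  have hterm : ∀ m, ‖a k m * b m l‖ ≤ rowMajorant w a b k (m, l) / w k l := by
    intro m
    rw [le_div_iff₀ (hw k l)]
    calc ‖a k m * b m l‖ * w k l ≤ ‖a k m‖ * ‖b m l‖ * (w k m * w m l) :=
          mul_le_mul (norm_mul_le _ _) (hmul k m l) (hw k l).le
            (mul_nonneg (norm_nonneg _) (norm_nonneg _))
      _ = rowMajorant w a b k (m, l) := by rw [rowMajorant]; ring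
  rw [← le_div_iff₀ (hw k l)]
  exact tsum_of_norm_bounded (hF.hasSum.div_const _) hterm

lemma mul (hw : ∀ k l, 0 < w k l) (hmul : ∀ k m l, w k l ≤ w k m * w m l)
    (ha : WeightedRowSumsLE w a Na) (hb : WeightedRowSumsLE w b Nb) :
    WeightedRowSumsLE w (tsumMatMul a b) (Na * Nb) := by
  intro k
  have hw₀ : ∀ k l, 0 ≤ w k l := fun k l => (hw k l).le
  have hF := summable_rowMajorant ha hb hw₀ k
  have hcol : ∀ l, Summable fun m => rowMajorant w a b k (m, l) :=
    hF.prod_symm.prod_factor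
  have hG : Summable fun l => ∑' m, rowMajorant w a b k (m, l) :=
    ((summable_prod_of_nonneg fun p => rowMajorant_nonneg hw₀ a b k p.swap).1 hF.prod_symm).2
  have hentry : ∀ l, ‖tsumMatMul a b k l‖ * w k l ≤ ∑' m, rowMajorant w a b k (m, l) :=
    fun l => norm_tsumMatMul_mul_le hw hmul (hcol l)
  have hsum := hG.of_nonneg_of_le (fun l => mul_nonneg (norm_nonneg _) (hw₀ k l)) hentry
  refine ⟨hsum, ?_⟩
  calc ∑' l, ‖tsumMatMul a b k l‖ * w k l
      ≤ ∑' l, ∑' m, rowMajorant w a b k (m, l) := hsum.tsum_le_tsum hentry hG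
    _ = ∑' m, ∑' l, rowMajorant w a b k (m, l) :=
        Summable.tsum_comm' (f := fun m l => rowMajorant w a b k (m, l)) hF hF.prod_factor hcol
    _ ≤ Na * Nb := tsum_tsum_rowMajorant_le ha hb hw₀ k

end WeightedRowSumsLE

/-- Column sums are row sums of the transposes, and `(ab)ᵀ = bᵀaᵀ` over a commutative ring. -/
lemma WeightedRowSumsLE.transpose_mul {ι R : Type*} [SeminormedCommRing R]
    {w : ι → ι → ℝ} {a b : ι → ι → R} {Na Nb : ℝ}
    (hw : ∀ k l, 0 < w k l) (hmul : ∀ k m l, w k l ≤ w k m * w m l)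
    (ha : WeightedRowSumsLE (fun k l => w l k) (fun k l => a l k) Na)
    (hb : WeightedRowSumsLE (fun k l => w l k) (fun k l => b l k) Nb) :
    WeightedRowSumsLE (fun k l => w l k) (fun k l => tsumMatMul a b l k) (Na * Nb) := by
  have htranspose : (fun k l => tsumMatMul a b l k)
      = tsumMatMul (fun k l => b l k) (fun k l => a l k) := by
    funext k l
    exact tsum_congr fun m => mul_comm _ _
  rw [htranspose, mul_comm Na]
  exact hb.mul (fun k l => hw l k) (fun k m l => (hmul l m k).trans_eq (mul_comm _ _)) ha

lemma schurWeight_pos (s : ℝ) (k l : ℤ) : 0 < schurWeight s k l :=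
  Real.rpow_pos_of_pos (by positivity) s

lemma schurWeight_le_mul {s : ℝ} (hs : 0 ≤ s) (k m l : ℤ) :
    schurWeight s k l ≤ schurWeight s k m * schurWeight s m l := by
  have hdist : 1 + |k - l| ≤ (1 + |k - m|) * (1 + |m - l|) := by
    nlinarith [abs_sub_le k m l, abs_nonneg (k - m), abs_nonneg (m - l)]
  unfold schurWeight
  rw [← Real.mul_rpow (by positivity) (by positivity)]
  exact Real.rpow_le_rpow (by positivity) (mod_cast hdist) hs

/-- The weighted Schur algebra `A¹_s` is closed under matrix multiplication, with a
multiplicative constant depending only on `s`. -/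
theorem stmt_6 (s : ℝ) (hs : 0 ≤ s) :
    ∃ C : ℝ, 0 < C ∧
      ∀ (a b : ℤ → ℤ → ℂ) (Na Nb : ℝ),
        (∀ k : ℤ, Summable (fun l : ℤ => ‖a k l‖ * schurWeight s k l) ∧
          ∑' l : ℤ, ‖a k l‖ * schurWeight s k l ≤ Na) →
        (∀ l : ℤ, Summable (fun k : ℤ => ‖a k l‖ * schurWeight s k l) ∧
          ∑' k : ℤ, ‖a k l‖ * schurWeight s k l ≤ Na) →
        (∀ k : ℤ, Summable (fun l : ℤ => ‖b k l‖ * schurWeight s k l) ∧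
          ∑' l : ℤ, ‖b k l‖ * schurWeight s k l ≤ Nb) →
        (∀ l : ℤ, Summable (fun k : ℤ => ‖b k l‖ * schurWeight s k l) ∧
          ∑' k : ℤ, ‖b k l‖ * schurWeight s k l ≤ Nb) →
        (∀ k : ℤ, Summable (fun l : ℤ => ‖∑' m : ℤ, a k m * b m l‖ * schurWeight s k l) ∧
          ∑' l : ℤ, ‖∑' m : ℤ, a k m * b m l‖ * schurWeight s k l ≤ C * Na * Nb) ∧
        (∀ l : ℤ, Summable (fun k : ℤ => ‖∑' m : ℤ, a k m * b m l‖ * schurWeight s k l) ∧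
          ∑' k : ℤ, ‖∑' m : ℤ, a k m * b m l‖ * schurWeight s k l ≤ C * Na * Nb) := by
  refine ⟨1, one_pos, fun a b Na Nb haRows haCols hbRows hbCols => ?_⟩
  rw [one_mul]
  exact ⟨WeightedRowSumsLE.mul (schurWeight_pos s) (schurWeight_le_mul hs) haRows hbRows,
    WeightedRowSumsLE.transpose_mul (schurWeight_pos s) (schurWeight_le_mul hs)
      haCols hbCols⟩
end

section
/- Let G = {g_x} be a frame for H whose Gramian A(G,G) = (⟨g_x, g_y⟩) satisfies the Schur condition with constant M = ‖A(G,G)‖_{A¹}, and let G̃ = {g̃_x} be a dual frame (every h ∈ H satisfies h = Σ_x ⟨h, g̃_x⟩ g_x). Suppose the sequences E = {e_n}, F = {f_n} satisfy max{sup_n Σ_x |⟨e_n − f_n, g̃_x⟩|, sup_x Σ_n |⟨e_n − f_n, g̃_x⟩|} ≤ ε. Then for every finitely supported scalar sequence c, ‖Σ_n c_n (e_n − f_n)‖ ≤ √M · ε · (Σ_n |c_n|²)^{1/2}. -/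
/-!
Put `S = ∑ₙ cₙ (eₙ - fₙ)` and `dₓ = ⟪S, g̃ₓ⟫`, so that `S = ∑ₓ dₓ gₓ` by duality. Then
`‖S‖² = ⟪S, S⟫` is at most the quadratic form of the kernel `|⟪gₓ, g_y⟫|` evaluated at `|d|`,
while `|d|` is dominated by the kernel `|⟪eₙ - fₙ, g̃ₓ⟫|` applied to `|c|`. Schur's test bounds the
first by `M ‖d‖²` and the second by `ε ‖c‖`. All estimates are carried out in `ℝ≥0∞`, where
nonnegative double series can be rearranged freely.
-/

open scoped ENNReal InnerProductSpace

namespace ENNReal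

variable {ι κ : Type*}

theorem two_mul_mul_le_add_sq (a b : ℝ≥0∞) : 2 * a * b ≤ a ^ 2 + b ^ 2 := by
  rcases eq_top_or_lt_top a with rfl | ha
  · simp
  rcases eq_top_or_lt_top b with rfl | hb
  · simp
  lift a to NNReal using ha.ne
  lift b to NNReal using hb.ne
  exact_mod_cast two_mul_le_add_sq a b

/-- Cauchy–Schwarz for weighted series, proved by summing the Lagrange-type inequality
`2 (u i v j) (u j v i) ≤ (u i v j)² + (u j v i)²` over all pairs. -/
theorem tsum_mul_mul_sq_le (w u v : ι → ℝ≥0∞) :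
    (∑' i, w i * u i * v i) ^ 2 ≤ (∑' i, w i * u i ^ 2) * ∑' i, w i * v i ^ 2 := by
  have hpair : ∀ i j, 2 * (w i * u i * v i * (w j * u j * v j)) ≤
      w i * u i ^ 2 * (w j * v j ^ 2) + w j * u j ^ 2 * (w i * v i ^ 2) := by
    intro i j
    calc 2 * (w i * u i * v i * (w j * u j * v j))
        = w i * w j * (2 * (u i * v j) * (u j * v i)) := by ring
      _ ≤ w i * w j * ((u i * v j) ^ 2 + (u j * v i) ^ 2) := by
        gcongr; exact two_mul_mul_le_add_sq _ _
      _ = _ := by ring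
  rw [← ENNReal.mul_le_mul_iff_right two_ne_zero ofNat_ne_top]
  calc 2 * (∑' i, w i * u i * v i) ^ 2
      = ∑' i, ∑' j, 2 * (w i * u i * v i * (w j * u j * v j)) := by
        simp_rw [sq, ← ENNReal.tsum_mul_right, ← ENNReal.tsum_mul_left]
    _ ≤ ∑' i, ∑' j, (w i * u i ^ 2 * (w j * v j ^ 2) + w j * u j ^ 2 * (w i * v i ^ 2)) :=
        ENNReal.tsum_le_tsum fun i => ENNReal.tsum_le_tsum fun j => hpair i j
    _ = 2 * ((∑' i, w i * u i ^ 2) * ∑' i, w i * v i ^ 2) := by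
        simp only [ENNReal.tsum_add]
        rw [ENNReal.tsum_comm (f := fun i j => w j * u j ^ 2 * (w i * v i ^ 2))]
        simp only [ENNReal.tsum_mul_left, ENNReal.tsum_mul_right]
        ring

/-- **Schur test** for nonnegative kernels. -/
theorem tsum_sq_tsum_mul_le (K : ι → κ → ℝ≥0∞) (a : κ → ℝ≥0∞) {R C : ℝ≥0∞}
    (hrow : ∀ i, ∑' j, K i j ≤ R) (hcol : ∀ j, ∑' i, K i j ≤ C) :
    ∑' i, (∑' j, K i j * a j) ^ 2 ≤ R * C * ∑' j, a j ^ 2 := by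
  calc ∑' i, (∑' j, K i j * a j) ^ 2
      ≤ ∑' i, (∑' j, K i j) * ∑' j, K i j * a j ^ 2 := by
        refine ENNReal.tsum_le_tsum fun i => ?_
        simpa using tsum_mul_mul_sq_le (K i) 1 a
    _ ≤ ∑' i, R * ∑' j, K i j * a j ^ 2 := by gcongr with i; exact hrow i
    _ = R * ∑' j, (∑' i, K i j) * a j ^ 2 := by
        rw [ENNReal.tsum_mul_left, ENNReal.tsum_comm]; simp only [ENNReal.tsum_mul_right]
    _ ≤ R * ∑' j, C * a j ^ 2 := by gcongr with j; exact hcol j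
    _ = R * C * ∑' j, a j ^ 2 := by rw [ENNReal.tsum_mul_left, mul_assoc]

theorem tsum_mul_tsum_mul_sq_le (K : ι → κ → ℝ≥0∞) (b : ι → ℝ≥0∞) (a : κ → ℝ≥0∞)
    {R C : ℝ≥0∞} (hrow : ∀ i, ∑' j, K i j ≤ R) (hcol : ∀ j, ∑' i, K i j ≤ C) :
    (∑' i, b i * ∑' j, K i j * a j) ^ 2 ≤ R * C * (∑' i, b i ^ 2) * ∑' j, a j ^ 2 := by
  calc (∑' i, b i * ∑' j, K i j * a j) ^ 2
      ≤ (∑' i, b i ^ 2) * ∑' i, (∑' j, K i j * a j) ^ 2 := by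
        simpa using tsum_mul_mul_sq_le 1 b fun i => ∑' j, K i j * a j
    _ ≤ (∑' i, b i ^ 2) * (R * C * ∑' j, a j ^ 2) := by
        gcongr; exact tsum_sq_tsum_mul_le K a hrow hcol
    _ = R * C * (∑' i, b i ^ 2) * ∑' j, a j ^ 2 := by ring

end ENNReal

section InnerProductSpace

variable {𝕜 E ι κ : Type*} [RCLike 𝕜] [NormedAddCommGroup E] [InnerProductSpace 𝕜 E]

theorem enorm_sq_le_tsum_enorm_mul_gram {d : ι → 𝕜} {g : ι → E} {S : E}
    (hS : HasSum (fun x => d x • g x) S) :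
    ‖S‖ₑ ^ 2 ≤ ∑' x, ‖d x‖ₑ * ∑' y, ‖⟪g x, g y⟫_𝕜‖ₑ * ‖d y‖ₑ := by
  have hinner : ∀ v, ‖⟪v, S⟫_𝕜‖ₑ ≤ ∑' y, ‖⟪v, g y⟫_𝕜‖ₑ * ‖d y‖ₑ := by
    intro v
    have hv : HasSum (fun y => d y * ⟪v, g y⟫_𝕜) ⟪v, S⟫_𝕜 := by
      simpa only [innerSL_apply_apply, inner_smul_right] using (innerSL 𝕜 v).hasSum hS
    exact hv.enorm_le_of_bounded ENNReal.summable.hasSum fun y => by rw [enorm_mul, mul_comm]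
  calc ‖S‖ₑ ^ 2 = ‖⟪S, S⟫_𝕜‖ₑ := by
        rw [inner_self_eq_norm_sq_to_K, enorm_pow, ← ofReal_norm, ← ofReal_norm, RCLike.norm_ofReal,
          abs_norm]
    _ ≤ ∑' x, ‖⟪S, g x⟫_𝕜‖ₑ * ‖d x‖ₑ := hinner S
    _ = ∑' x, ‖d x‖ₑ * ‖⟪g x, S⟫_𝕜‖ₑ := by
        refine tsum_congr fun x => ?_
        rw [mul_comm, ← ofReal_norm ⟪S, g x⟫_𝕜, norm_inner_symm, ofReal_norm]
    _ ≤ ∑' x, ‖d x‖ₑ * ∑' y, ‖⟪g x, g y⟫_𝕜‖ₑ * ‖d y‖ₑ := by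
        gcongr with x; exact hinner (g x)

theorem enorm_sq_le_of_hasSum_smul {d : ι → 𝕜} {g : ι → E} {S : E} {M : ℝ≥0∞}
    (hS : HasSum (fun x => d x • g x) S) (hrow : ∀ x, ∑' y, ‖⟪g x, g y⟫_𝕜‖ₑ ≤ M)
    (hcol : ∀ y, ∑' x, ‖⟪g x, g y⟫_𝕜‖ₑ ≤ M) :
    ‖S‖ₑ ^ 2 ≤ M * ∑' x, ‖d x‖ₑ ^ 2 := by
  refine (enorm_sq_le_tsum_enorm_mul_gram hS).trans ?_
  rw [← ENNReal.pow_le_pow_left_iff two_ne_zero]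
  calc _ ≤ M * M * (∑' x, ‖d x‖ₑ ^ 2) * ∑' x, ‖d x‖ₑ ^ 2 :=
        ENNReal.tsum_mul_tsum_mul_sq_le _ _ _ hrow hcol
    _ = (M * ∑' x, ‖d x‖ₑ ^ 2) ^ 2 := by ring

theorem tsum_enorm_inner_sum_smul_sq_le (s : Finset κ) (c : κ → 𝕜) (v : κ → E) (h : ι → E)
    {R C : ℝ≥0∞} (hrow : ∀ x, ∑' n, ‖⟪v n, h x⟫_𝕜‖ₑ ≤ R) (hcol : ∀ n, ∑' x, ‖⟪v n, h x⟫_𝕜‖ₑ ≤ C) :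
    ∑' x, ‖⟪∑ n ∈ s, c n • v n, h x⟫_𝕜‖ₑ ^ 2 ≤ R * C * ∑ n ∈ s, ‖c n‖ₑ ^ 2 := by
  set a : κ → ℝ≥0∞ := (s : Set κ).indicator fun n => ‖c n‖ₑ
  have hcoeff : ∀ x, ‖⟪∑ n ∈ s, c n • v n, h x⟫_𝕜‖ₑ ≤ ∑' n, ‖⟪v n, h x⟫_𝕜‖ₑ * a n := by
    intro x
    calc ‖⟪∑ n ∈ s, c n • v n, h x⟫_𝕜‖ₑ
        ≤ ∑ n ∈ s, ‖⟪v n, h x⟫_𝕜‖ₑ * ‖c n‖ₑ := by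
          simp only [sum_inner, inner_smul_left]
          refine (enorm_sum_le _ _).trans_eq (Finset.sum_congr rfl fun n _ => ?_)
          rw [enorm_mul, mul_comm, RCLike.enorm_conj]
      _ = ∑' n, ‖⟪v n, h x⟫_𝕜‖ₑ * a n := by
          rw [sum_eq_tsum_indicator]
          exact tsum_congr fun n => Set.indicator_mul_right _ _ _
  calc ∑' x, ‖⟪∑ n ∈ s, c n • v n, h x⟫_𝕜‖ₑ ^ 2
      ≤ ∑' x, (∑' n, ‖⟪v n, h x⟫_𝕜‖ₑ * a n) ^ 2 := by gcongr with x; exact hcoeff x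
    _ ≤ R * C * ∑' n, a n ^ 2 := ENNReal.tsum_sq_tsum_mul_le _ a hrow hcol
    _ = R * C * ∑ n ∈ s, ‖c n‖ₑ ^ 2 := by
        rw [sum_eq_tsum_indicator]
        refine congrArg _ (tsum_congr fun n => ?_)
        by_cases hn : n ∈ s <;> simp [a, hn]

end InnerProductSpace

theorem tsum_enorm_le_ofReal {ι E : Type*} [SeminormedAddCommGroup E] {f : ι → E} {M : ℝ}
    (hf : Summable fun i => ‖f i‖) (hM : ∑' i, ‖f i‖ ≤ M) :
    ∑' i, ‖f i‖ₑ ≤ ENNReal.ofReal M := by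
  simp only [← ofReal_norm]
  rw [← ENNReal.ofReal_tsum_of_nonneg (fun _ => norm_nonneg _) hf]
  exact ENNReal.ofReal_le_ofReal hM

theorem stmt_9_general {H : Type*} [NormedAddCommGroup H] [InnerProductSpace ℂ H]
    (g gt F E : ℤ → H) (M ε : ℝ)
    (hGram_row : ∀ x : ℤ, Summable (fun y : ℤ => ‖(inner ℂ (g x) (g y) : ℂ)‖) ∧
      ∑' y : ℤ, ‖(inner ℂ (g x) (g y) : ℂ)‖ ≤ M)
    (hGram_col : ∀ y : ℤ, Summable (fun x : ℤ => ‖(inner ℂ (g x) (g y) : ℂ)‖) ∧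
      ∑' x : ℤ, ‖(inner ℂ (g x) (g y) : ℂ)‖ ≤ M)
    (hdual : ∀ h : H, HasSum (fun x : ℤ => (inner ℂ h (gt x) : ℂ) • g x) h)
    (hpert_row : ∀ n : ℤ, Summable (fun x : ℤ => ‖(inner ℂ (E n - F n) (gt x) : ℂ)‖) ∧
      ∑' x : ℤ, ‖(inner ℂ (E n - F n) (gt x) : ℂ)‖ ≤ ε)
    (hpert_col : ∀ x : ℤ, Summable (fun n : ℤ => ‖(inner ℂ (E n - F n) (gt x) : ℂ)‖) ∧
      ∑' n : ℤ, ‖(inner ℂ (E n - F n) (gt x) : ℂ)‖ ≤ ε) :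
    ∀ (F₀ : Finset ℤ) (c : ℤ → ℂ),
      ‖∑ n ∈ F₀, c n • (E n - F n)‖ ≤
        Real.sqrt M * ε * Real.sqrt (∑ n ∈ F₀, ‖c n‖ ^ 2) := by
  intro F₀ c
  have hM : 0 ≤ M := (tsum_nonneg fun _ => norm_nonneg _).trans (hGram_row 0).2
  have hε : 0 ≤ ε := (tsum_nonneg fun _ => norm_nonneg _).trans (hpert_row 0).2
  set S := ∑ n ∈ F₀, c n • (E n - F n)
  have hcoeff : ∑' x, ‖⟪S, gt x⟫_ℂ‖ₑ ^ 2 ≤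
      ENNReal.ofReal ε * ENNReal.ofReal ε * ∑ n ∈ F₀, ‖c n‖ₑ ^ 2 :=
    tsum_enorm_inner_sum_smul_sq_le F₀ c _ gt
      (fun x => tsum_enorm_le_ofReal (hpert_col x).1 (hpert_col x).2)
      (fun n => tsum_enorm_le_ofReal (hpert_row n).1 (hpert_row n).2)
  have hsynth : ‖S‖ₑ ^ 2 ≤ ENNReal.ofReal M * ∑' x, ‖⟪S, gt x⟫_ℂ‖ₑ ^ 2 :=
    enorm_sq_le_of_hasSum_smul (hdual S)
      (fun x => tsum_enorm_le_ofReal (hGram_row x).1 (hGram_row x).2)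
      (fun y => tsum_enorm_le_ofReal (hGram_col y).1 (hGram_col y).2)
  rw [← ENNReal.ofReal_le_ofReal_iff (by positivity), ofReal_norm,
    ← ENNReal.pow_le_pow_left_iff two_ne_zero, ← ENNReal.ofReal_pow (by positivity)]
  calc ‖S‖ₑ ^ 2 ≤ ENNReal.ofReal M * (ENNReal.ofReal ε * ENNReal.ofReal ε * ∑ n ∈ F₀, ‖c n‖ₑ ^ 2) :=
        hsynth.trans (by gcongr)
    _ = ENNReal.ofReal ((Real.sqrt M * ε * Real.sqrt (∑ n ∈ F₀, ‖c n‖ ^ 2)) ^ 2) := by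
        rw [mul_pow, mul_pow, Real.sq_sqrt hM, Real.sq_sqrt (by positivity),
          ENNReal.ofReal_mul (by positivity), ENNReal.ofReal_mul hM, ENNReal.ofReal_pow hε,
          ENNReal.ofReal_sum_of_nonneg fun _ _ => by positivity]
        simp only [ENNReal.ofReal_pow (norm_nonneg _), ofReal_norm]
        ring

/-- Core estimate of Proposition 3.5: cross-Gramian localization of the perturbation
gives an ℓ²-synthesis bound. -/
theorem stmt_9 {H : Type*} [NormedAddCommGroup H] [InnerProductSpace ℂ H] [CompleteSpace H]
    (g gt F E : ℤ → H) (M ε : ℝ)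
    (hGram_row : ∀ x : ℤ, Summable (fun y : ℤ => ‖(inner ℂ (g x) (g y) : ℂ)‖) ∧
      ∑' y : ℤ, ‖(inner ℂ (g x) (g y) : ℂ)‖ ≤ M)
    (hGram_col : ∀ y : ℤ, Summable (fun x : ℤ => ‖(inner ℂ (g x) (g y) : ℂ)‖) ∧
      ∑' x : ℤ, ‖(inner ℂ (g x) (g y) : ℂ)‖ ≤ M)
    (hdual : ∀ h : H, HasSum (fun x : ℤ => (inner ℂ h (gt x) : ℂ) • g x) h)
    (hpert_row : ∀ n : ℤ, Summable (fun x : ℤ => ‖(inner ℂ (E n - F n) (gt x) : ℂ)‖) ∧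
      ∑' x : ℤ, ‖(inner ℂ (E n - F n) (gt x) : ℂ)‖ ≤ ε)
    (hpert_col : ∀ x : ℤ, Summable (fun n : ℤ => ‖(inner ℂ (E n - F n) (gt x) : ℂ)‖) ∧
      ∑' n : ℤ, ‖(inner ℂ (E n - F n) (gt x) : ℂ)‖ ≤ ε) :
    ∀ (F₀ : Finset ℤ) (c : ℤ → ℂ),
      ‖∑ n ∈ F₀, c n • (E n - F n)‖ ≤
        Real.sqrt M * ε * Real.sqrt (∑ n ∈ F₀, ‖c n‖ ^ 2) :=
  stmt_9_general g gt F E M ε hGram_row hGram_col hdual hpert_row hpert_col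
end

section
/- Let F be a frame for H with bounds A, B, let G, G̃ be as above with M = ‖A(G,G)‖_{A¹}, and let E satisfy max{sup_n Σ_x |⟨e_n − f_n, g̃_x⟩|, sup_x Σ_n |⟨e_n − f_n, g̃_x⟩|} ≤ ε with 0 < ε < (√(A⁻¹ M))⁻¹. Then E is a frame for H with bounds A(1 − √(A⁻¹M) ε)² and B(1 + √(B⁻¹M) ε)². -/
/-!
Write `d n = e n - f n`. Expanding `d n = ∑ₓ ⟨d n, g̃ₓ⟩ gₓ` gives
`⟨h, d n⟩ = ∑ₓ ⟨d n, g̃ₓ⟩ ⟨h, gₓ⟩`, so the Schur test for the cross-Gramian `(⟨d n, g̃ₓ⟩)`,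
whose row and column sums are at most `ε`, bounds `∑ₙ |⟨h, d n⟩|²` by `ε² ∑ₓ |⟨h, gₓ⟩|²`.
The Schur test for the Gramian of `G` gives the Bessel bound `∑ₓ |⟨h, gₓ⟩|² ≤ M ‖h‖²`,
so `(d n)` is a Bessel sequence with bound `ε² M`. Since `e n = f n + d n`, the triangle
inequality in `ℓ²` moves the frame bounds `√A ‖h‖`, `√B ‖h‖` of `F` by at most `ε √M ‖h‖`;
the smallness of `ε` keeps the lower one positive.
-/

open Finset

section

variable {ι κ V : Type*}

theorem summable_mul_of_summable_sq {k a : ι → ℝ} (hk : ∀ i, 0 ≤ k i) (hk_sum : Summable k)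
    (ha : Summable fun i => a i ^ 2) : Summable fun i => k i * a i := by
  refine hk_sum.mul_right (1 + ∑' i, a i ^ 2) |>.of_norm_bounded fun i => ?_
  have hai : a i ^ 2 ≤ ∑' i, a i ^ 2 := ha.le_tsum i fun j _ => sq_nonneg (a j)
  rw [norm_mul, Real.norm_of_nonneg (hk i), Real.norm_eq_abs]
  refine mul_le_mul_of_nonneg_left ?_ (hk i)
  nlinarith [sq_nonneg (|a i| - 1), sq_abs (a i)]

theorem sq_tsum_mul_le_tsum_mul_tsum_mul_sq {k a : ι → ℝ} (hk : ∀ i, 0 ≤ k i)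
    (hk_sum : Summable k) (hka : Summable fun i => k i * a i)
    (hkaa : Summable fun i => k i * a i ^ 2) :
    (∑' i, k i * a i) ^ 2 ≤ (∑' i, k i) * ∑' i, k i * a i ^ 2 := by
  refine le_of_tendsto' (hka.hasSum.pow 2) fun s => ?_
  calc (∑ i ∈ s, k i * a i) ^ 2 ≤ (∑ i ∈ s, k i) * ∑ i ∈ s, k i * a i ^ 2 :=
        sum_sq_le_sum_mul_sum_of_sq_le_mul s (fun i _ => hk i)
          (fun i _ => mul_nonneg (hk i) (sq_nonneg _)) fun i _ => (by ring : _ = _).le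
    _ ≤ (∑' i, k i) * ∑' i, k i * a i ^ 2 :=
        mul_le_mul (hk_sum.sum_le_tsum s fun i _ => hk i)
          (hkaa.sum_le_tsum s fun i _ => mul_nonneg (hk i) (sq_nonneg _))
          (sum_nonneg fun i _ => mul_nonneg (hk i) (sq_nonneg _))
          (tsum_nonneg hk)

/-- The Schur norm bound `‖k‖_{A¹} ≤ M`. -/
def SchurBounded [SeminormedAddCommGroup V] (k : ι → κ → V) (M : ℝ) : Prop :=
  (∀ i, Summable (fun j => ‖k i j‖) ∧ ∑' j, ‖k i j‖ ≤ M) ∧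
    ∀ j, Summable (fun i => ‖k i j‖) ∧ ∑' i, ‖k i j‖ ≤ M

namespace SchurBounded

variable [SeminormedAddCommGroup V] {k : ι → κ → V} {M : ℝ}

theorem nonneg [Nonempty ι] (hk : SchurBounded k M) : 0 ≤ M :=
  (tsum_nonneg fun _ => norm_nonneg _).trans (hk.1 (Classical.arbitrary ι)).2

theorem tsum_sq_le [Nonempty ι] (hk : SchurBounded k M) {a : κ → ℝ}
    (ha : Summable fun j => a j ^ 2) :
    Summable (fun i => (∑' j, ‖k i j‖ * a j) ^ 2) ∧
      ∑' i, (∑' j, ‖k i j‖ * a j) ^ 2 ≤ M ^ 2 * ∑' j, a j ^ 2 := by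
  set Q := ∑' j, a j ^ 2
  set t : ι → ℝ := fun i => ∑' j, ‖k i j‖ * a j ^ 2
  have hkaa (i : ι) : Summable fun j => ‖k i j‖ * a j ^ 2 :=
    ((hk.1 i).1.mul_right Q).of_nonneg_of_le (fun j => by positivity) fun j =>
      mul_le_mul_of_nonneg_left (ha.le_tsum j fun j _ => sq_nonneg (a j)) (norm_nonneg _)
  have hrow (i : ι) : (∑' j, ‖k i j‖ * a j) ^ 2 ≤ M * t i :=
    (sq_tsum_mul_le_tsum_mul_tsum_mul_sq (fun j => norm_nonneg _) (hk.1 i).1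
      (summable_mul_of_summable_sq (fun j => norm_nonneg _) (hk.1 i).1 ha) (hkaa i)).trans
      (mul_le_mul_of_nonneg_right (hk.1 i).2 (tsum_nonneg fun j => by positivity))
  have hcol (s : Finset ι) : ∑ i ∈ s, t i ≤ M * Q := by
    rw [← Summable.tsum_finsetSum fun i _ => hkaa i, ← tsum_mul_left]
    refine Summable.tsum_le_tsum (fun j => ?_) (summable_sum fun i _ => hkaa i) (ha.mul_left M)
    rw [← sum_mul]
    exact mul_le_mul_of_nonneg_right
      (((hk.2 j).1.sum_le_tsum s fun i _ => norm_nonneg _).trans (hk.2 j).2) (sq_nonneg _)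
  have ht : Summable t := summable_of_sum_le (fun i => tsum_nonneg fun j => by positivity) hcol
  have hM := hk.nonneg
  refine ⟨(ht.mul_left M).of_nonneg_of_le (fun i => sq_nonneg _) hrow, ?_⟩
  calc ∑' i, (∑' j, ‖k i j‖ * a j) ^ 2 ≤ ∑' i, M * t i :=
        Summable.tsum_le_tsum hrow ((ht.mul_left M).of_nonneg_of_le (fun i => sq_nonneg _) hrow)
          (ht.mul_left M)
    _ = M * ∑' i, t i := tsum_mul_left
    _ ≤ M * (M * Q) := mul_le_mul_of_nonneg_left (ht.tsum_le_of_sum_le hcol) hM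
    _ = M ^ 2 * Q := by ring

theorem sum_sum_mul_le {k : ι → ι → V} (hk : SchurBounded k M) (u : ι → ℝ) (s : Finset ι) :
    ∑ i ∈ s, ∑ j ∈ s, u i * u j * ‖k i j‖ ≤ M * ∑ i ∈ s, u i ^ 2 := by
  have hrow (i : ι) : ∑ j ∈ s, ‖k i j‖ ≤ M :=
    ((hk.1 i).1.sum_le_tsum s fun _ _ => norm_nonneg _).trans (hk.1 i).2
  have hcol (j : ι) : ∑ i ∈ s, ‖k i j‖ ≤ M :=
    ((hk.2 j).1.sum_le_tsum s fun _ _ => norm_nonneg _).trans (hk.2 j).2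
  calc ∑ i ∈ s, ∑ j ∈ s, u i * u j * ‖k i j‖
      ≤ ∑ i ∈ s, ∑ j ∈ s, (u i ^ 2 * ‖k i j‖ + u j ^ 2 * ‖k i j‖) / 2 := by
        gcongr with i _ j _
        nlinarith [norm_nonneg (k i j), mul_nonneg (norm_nonneg (k i j)) (sq_nonneg (u i - u j))]
    _ = (∑ i ∈ s, u i ^ 2 * ∑ j ∈ s, ‖k i j‖ + ∑ i ∈ s, ∑ j ∈ s, u j ^ 2 * ‖k i j‖) / 2 := by
        simp only [← sum_div, ← sum_add_distrib, mul_sum]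
    _ = (∑ i ∈ s, u i ^ 2 * ∑ j ∈ s, ‖k i j‖ + ∑ j ∈ s, u j ^ 2 * ∑ i ∈ s, ‖k i j‖) / 2 := by
        rw [sum_comm (f := fun i j => u j ^ 2 * ‖k i j‖)]
        simp only [mul_sum]
    _ ≤ (∑ i ∈ s, u i ^ 2 * M + ∑ j ∈ s, u j ^ 2 * M) / 2 := by
        gcongr with i _ j _
        · exact hrow i
        · exact hcol j
    _ = M * ∑ i ∈ s, u i ^ 2 := by rw [← sum_mul]; ring

end SchurBounded

theorem sqrt_tsum_sq_le_of_le_add {u v w : ι → ℝ} (hu : ∀ i, 0 ≤ u i) (hv : ∀ i, 0 ≤ v i)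
    (hw : ∀ i, 0 ≤ w i) (huvw : ∀ i, u i ≤ v i + w i) (hv2 : Summable fun i => v i ^ 2)
    (hw2 : Summable fun i => w i ^ 2) :
    Summable (fun i => u i ^ 2) ∧
      √(∑' i, u i ^ 2) ≤ √(∑' i, v i ^ 2) + √(∑' i, w i ^ 2) := by
  have hmink := Real.Lp_add_le_tsum_of_nonneg (p := 2) one_le_two hv hw
    (by simpa only [Real.rpow_two] using hv2) (by simpa only [Real.rpow_two] using hw2)
  simp only [Real.rpow_two, ← Real.sqrt_eq_rpow] at hmink
  have hle (i : ι) : u i ^ 2 ≤ (v i + w i) ^ 2 := pow_le_pow_left₀ (hu i) (huvw i) 2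
  have hu2 := hmink.1.of_nonneg_of_le (fun i => sq_nonneg _) hle
  exact ⟨hu2, (Real.sqrt_le_sqrt (hu2.tsum_le_tsum hle hmink.1)).trans hmink.2⟩

section Bessel

variable {𝕜 H : Type*} [RCLike 𝕜] [NormedAddCommGroup H] [InnerProductSpace 𝕜 H]

variable (𝕜) in
def IsBesselSequence (g : ι → H) (B : ℝ) : Prop :=
  ∀ f : H, Summable (fun i => ‖inner 𝕜 f (g i)‖ ^ 2) ∧ ∑' i, ‖inner 𝕜 f (g i)‖ ^ 2 ≤ B * ‖f‖ ^ 2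

open ComplexConjugate in
theorem SchurBounded.isBesselSequence [Nonempty ι] {g : ι → H} {M : ℝ}
    (hg : SchurBounded (fun i j => inner 𝕜 (g i) (g j)) M) : IsBesselSequence 𝕜 g M := by
  intro f
  set c : ι → 𝕜 := fun i => inner 𝕜 f (g i)
  suffices key : ∀ s : Finset ι, ∑ i ∈ s, ‖c i‖ ^ 2 ≤ M * ‖f‖ ^ 2 by
    have hsum := summable_of_sum_le (fun i => sq_nonneg ‖c i‖) key
    exact ⟨hsum, hsum.tsum_le_of_sum_le key⟩
  intro s
  -- Testing `f` against `h` gives `S ≤ ‖f‖ ‖h‖`, and `‖h‖² ≤ M S` by the Schur bound.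
  set S := ∑ i ∈ s, ‖c i‖ ^ 2
  set h : H := ∑ i ∈ s, conj (c i) • g i
  have hfh : ‖inner 𝕜 f h‖ = S := by
    have : inner 𝕜 f h = ((S : ℝ) : 𝕜) := by
      simp only [h, S, inner_sum, inner_smul_right, RCLike.ofReal_sum, RCLike.ofReal_pow]
      exact sum_congr rfl fun i _ => RCLike.conj_mul (c i)
    rw [this, RCLike.norm_ofReal, abs_of_nonneg (sum_nonneg fun i _ => sq_nonneg _)]
  have hh : ‖h‖ ^ 2 ≤ M * S := by
    have hexp : inner 𝕜 h h = ∑ i ∈ s, ∑ j ∈ s, c i * conj (c j) * inner 𝕜 (g i) (g j) := by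
      simp only [h, sum_inner, inner_sum, inner_smul_left, inner_smul_right, RCLike.conj_conj,
        mul_sum]
      rw [sum_comm]
      exact sum_congr rfl fun i _ => sum_congr rfl fun j _ => by ring
    calc ‖h‖ ^ 2 = ‖inner 𝕜 h h‖ := by
          rw [inner_self_eq_norm_sq_to_K, ← RCLike.ofReal_pow, RCLike.norm_ofReal,
            abs_of_nonneg (sq_nonneg _)]
      _ ≤ ∑ i ∈ s, ∑ j ∈ s, ‖c i‖ * ‖c j‖ * ‖inner 𝕜 (g i) (g j)‖ := by
          rw [hexp]
          refine (norm_sum_le _ _).trans (sum_le_sum fun i _ => (norm_sum_le _ _).trans ?_)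
          simp only [norm_mul, RCLike.norm_conj, le_refl]
      _ ≤ M * S := hg.sum_sum_mul_le (fun i => ‖c i‖) s
  have hS : 0 ≤ S := sum_nonneg fun i _ => sq_nonneg _
  rcases hS.eq_or_lt with hS0 | hSpos
  · rw [← hS0]
    exact mul_nonneg hg.nonneg (sq_nonneg _)
  have hSfh : S ≤ ‖f‖ * ‖h‖ := hfh ▸ norm_inner_le_norm f h
  refine le_of_mul_le_mul_left ?_ hSpos
  calc S * S ≤ (‖f‖ * ‖h‖) ^ 2 := by nlinarith
    _ = ‖f‖ ^ 2 * ‖h‖ ^ 2 := by ring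
    _ ≤ ‖f‖ ^ 2 * (M * S) := by gcongr
    _ = S * (M * ‖f‖ ^ 2) := by ring

theorem IsBesselSequence.of_hasSum [Nonempty κ] {g : ι → H} {d : κ → H} {c : κ → ι → 𝕜}
    {M ε : ℝ} (hg : IsBesselSequence 𝕜 g M) (hd : ∀ n, HasSum (fun x => c n x • g x) (d n))
    (hc : SchurBounded c ε) : IsBesselSequence 𝕜 d (ε ^ 2 * M) := by
  intro f
  obtain ⟨ha, haM⟩ := hg f
  have hnorm (n : κ) : ‖inner 𝕜 f (d n)‖ ≤ ∑' x, ‖c n x‖ * ‖inner 𝕜 f (g x)‖ := by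
    refine ((hd n).mapL (innerSL 𝕜 f)).norm_le_of_bounded
      (summable_mul_of_summable_sq (fun _ => norm_nonneg _) (hc.1 n).1 ha).hasSum fun x => ?_
    simp only [innerSL_apply_apply, inner_smul_right, norm_mul, le_refl]
  have hsq (n : κ) := pow_le_pow_left₀ (norm_nonneg _) (hnorm n) 2
  obtain ⟨hv, hvle⟩ := hc.tsum_sq_le ha
  refine ⟨hv.of_nonneg_of_le (fun _ => sq_nonneg _) hsq, ?_⟩
  calc ∑' n, ‖inner 𝕜 f (d n)‖ ^ 2 ≤ ∑' n, (∑' x, ‖c n x‖ * ‖inner 𝕜 f (g x)‖) ^ 2 :=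
        Summable.tsum_le_tsum hsq (hv.of_nonneg_of_le (fun _ => sq_nonneg _) hsq) hv
    _ ≤ ε ^ 2 * ∑' x, ‖inner 𝕜 f (g x)‖ ^ 2 := hvle
    _ ≤ ε ^ 2 * (M * ‖f‖ ^ 2) := by gcongr
    _ = ε ^ 2 * M * ‖f‖ ^ 2 := by ring

theorem isBesselSequence_of_frame_bounds {F : ι → H} {A B : ℝ} (hA : 0 < A)
    (hframe : ∀ f : H, A * ‖f‖ ^ 2 ≤ ∑' i, ‖inner 𝕜 f (F i)‖ ^ 2 ∧
      ∑' i, ‖inner 𝕜 f (F i)‖ ^ 2 ≤ B * ‖f‖ ^ 2) :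
    IsBesselSequence 𝕜 F B := by
  intro f
  refine ⟨?_, (hframe f).2⟩
  rcases eq_or_ne f 0 with rfl | hf
  · simp
  by_contra hns
  have hlow := (hframe f).1
  rw [tsum_eq_zero_of_not_summable hns] at hlow
  have : 0 < A * ‖f‖ ^ 2 := by positivity
  linarith

theorem frame_bounds_of_isBesselSequence_sub {F E : ι → H} {A B D : ℝ} (hDA : D ≤ A)
    (hlow : ∀ f : H, A * ‖f‖ ^ 2 ≤ ∑' i, ‖inner 𝕜 f (F i)‖ ^ 2) (hF : IsBesselSequence 𝕜 F B)
    (hd : IsBesselSequence 𝕜 (fun i => E i - F i) D) (f : H) :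
    (√A - √D) ^ 2 * ‖f‖ ^ 2 ≤ ∑' i, ‖inner 𝕜 f (E i)‖ ^ 2 ∧
      ∑' i, ‖inner 𝕜 f (E i)‖ ^ 2 ≤ (√B + √D) ^ 2 * ‖f‖ ^ 2 := by
  have hsqrt (C : ℝ) : √(C * ‖f‖ ^ 2) = √C * ‖f‖ := by
    rw [Real.sqrt_mul' _ (sq_nonneg _), Real.sqrt_sq (norm_nonneg _)]
  obtain ⟨hFs, hFB⟩ := hF f
  obtain ⟨hds, hdD⟩ := hd f
  simp only [inner_sub_right] at hds hdD
  obtain ⟨hEs, hEup⟩ := sqrt_tsum_sq_le_of_le_add (fun _ => norm_nonneg _)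
    (fun _ => norm_nonneg _) (fun _ => norm_nonneg _) (fun i => norm_le_insert' _ _) hFs hds
  obtain ⟨-, hFup⟩ := sqrt_tsum_sq_le_of_le_add (fun _ => norm_nonneg _)
    (fun _ => norm_nonneg _) (fun _ => norm_nonneg _) (fun i => norm_le_insert _ _) hEs hds
  have hA := hsqrt A ▸ Real.sqrt_le_sqrt (hlow f)
  have hB := hsqrt B ▸ Real.sqrt_le_sqrt hFB
  have hD := hsqrt D ▸ Real.sqrt_le_sqrt hdD
  have hE : √(∑' i, ‖inner 𝕜 f (E i)‖ ^ 2) ^ 2 = ∑' i, ‖inner 𝕜 f (E i)‖ ^ 2 :=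
    Real.sq_sqrt (tsum_nonneg fun i => sq_nonneg _)
  constructor
  · have h0 : 0 ≤ (√A - √D) * ‖f‖ :=
      mul_nonneg (sub_nonneg.2 (Real.sqrt_le_sqrt hDA)) (norm_nonneg f)
    calc (√A - √D) ^ 2 * ‖f‖ ^ 2 = ((√A - √D) * ‖f‖) ^ 2 := by ring
      _ ≤ √(∑' i, ‖inner 𝕜 f (E i)‖ ^ 2) ^ 2 := pow_le_pow_left₀ h0 (by linarith) 2
      _ = _ := hE
  · calc ∑' i, ‖inner 𝕜 f (E i)‖ ^ 2 = √(∑' i, ‖inner 𝕜 f (E i)‖ ^ 2) ^ 2 := hE.symm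
      _ ≤ ((√B + √D) * ‖f‖) ^ 2 := pow_le_pow_left₀ (Real.sqrt_nonneg _) (by linarith) 2
      _ = (√B + √D) ^ 2 * ‖f‖ ^ 2 := by ring

end Bessel

theorem mul_sq_one_add_sqrt_inv_mul_mul {A : ℝ} (hA : 0 < A) (M t : ℝ) :
    A * (1 + √(A⁻¹ * M) * t) ^ 2 = (√A + √M * t) ^ 2 := by
  have hs : √(A⁻¹ * M) = (√A)⁻¹ * √M := by rw [Real.sqrt_mul (inv_nonneg.2 hA.le), Real.sqrt_inv]
  have hA' : √A ≠ 0 := (Real.sqrt_pos.2 hA).ne'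
  rw [hs]
  field_simp
  rw [Real.sq_sqrt hA.le]

theorem sq_mul_le_of_lt_inv_sqrt {A M ε : ℝ} (hA : 0 < A) (hM : 0 ≤ M) (hε : 0 ≤ ε)
    (h : ε < (√(A⁻¹ * M))⁻¹) : ε ^ 2 * M ≤ A := by
  have hs : √(A⁻¹ * M) ^ 2 = A⁻¹ * M := Real.sq_sqrt (by positivity)
  rcases (Real.sqrt_nonneg (A⁻¹ * M)).eq_or_lt with hs0 | hspos
  · rw [← hs0, inv_zero] at h
    linarith
  have hεs : ε * √(A⁻¹ * M) < 1 := by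
    calc ε * √(A⁻¹ * M) < (√(A⁻¹ * M))⁻¹ * √(A⁻¹ * M) := mul_lt_mul_of_pos_right h hspos
      _ = 1 := inv_mul_cancel₀ hspos.ne'
  have : (ε * √(A⁻¹ * M)) ^ 2 ≤ 1 := by nlinarith [mul_nonneg hε hspos.le]
  calc ε ^ 2 * M = A * (ε * √(A⁻¹ * M)) ^ 2 := by rw [mul_pow, hs]; field_simp
    _ ≤ A * 1 := by gcongr
    _ = A := mul_one A

end

theorem stmt_10_general {H : Type*} [NormedAddCommGroup H] [InnerProductSpace ℂ H]
    (g gt F E : ℤ → H) (A B M ε : ℝ) (hA : 0 < A) (hAB : A ≤ B)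
    (hframe : ∀ f : H,
      A * ‖f‖ ^ 2 ≤ ∑' n : ℤ, ‖(inner ℂ f (F n) : ℂ)‖ ^ 2 ∧
      ∑' n : ℤ, ‖(inner ℂ f (F n) : ℂ)‖ ^ 2 ≤ B * ‖f‖ ^ 2)
    (hGram_row : ∀ x : ℤ, Summable (fun y : ℤ => ‖(inner ℂ (g x) (g y) : ℂ)‖) ∧
      ∑' y : ℤ, ‖(inner ℂ (g x) (g y) : ℂ)‖ ≤ M)
    (hGram_col : ∀ y : ℤ, Summable (fun x : ℤ => ‖(inner ℂ (g x) (g y) : ℂ)‖) ∧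
      ∑' x : ℤ, ‖(inner ℂ (g x) (g y) : ℂ)‖ ≤ M)
    (hdual : ∀ h : H, HasSum (fun x : ℤ => (inner ℂ h (gt x) : ℂ) • g x) h)
    (hpert_row : ∀ n : ℤ, Summable (fun x : ℤ => ‖(inner ℂ (E n - F n) (gt x) : ℂ)‖) ∧
      ∑' x : ℤ, ‖(inner ℂ (E n - F n) (gt x) : ℂ)‖ ≤ ε)
    (hpert_col : ∀ x : ℤ, Summable (fun n : ℤ => ‖(inner ℂ (E n - F n) (gt x) : ℂ)‖) ∧
      ∑' n : ℤ, ‖(inner ℂ (E n - F n) (gt x) : ℂ)‖ ≤ ε)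
    (hε0 : 0 < ε) (hεsmall : ε < (Real.sqrt (A⁻¹ * M))⁻¹) :
    ∀ f : H,
      A * (1 - Real.sqrt (A⁻¹ * M) * ε) ^ 2 * ‖f‖ ^ 2 ≤
        ∑' n : ℤ, ‖(inner ℂ f (E n) : ℂ)‖ ^ 2 ∧
      ∑' n : ℤ, ‖(inner ℂ f (E n) : ℂ)‖ ^ 2 ≤
        B * (1 + Real.sqrt (B⁻¹ * M) * ε) ^ 2 * ‖f‖ ^ 2 := by
  have hGram : SchurBounded (fun x y => inner ℂ (g x) (g y)) M := ⟨hGram_row, hGram_col⟩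
  have hd : IsBesselSequence ℂ (fun n => E n - F n) (ε ^ 2 * M) :=
    hGram.isBesselSequence.of_hasSum (fun n => hdual (E n - F n)) ⟨hpert_row, hpert_col⟩
  have hDA : ε ^ 2 * M ≤ A := sq_mul_le_of_lt_inv_sqrt hA hGram.nonneg hε0.le hεsmall
  have hsqrtD : √(ε ^ 2 * M) = √M * ε := by
    rw [Real.sqrt_mul (sq_nonneg ε), Real.sqrt_sq hε0.le, mul_comm]
  have hlowA := mul_sq_one_add_sqrt_inv_mul_mul hA M (-ε)
  have hupB := mul_sq_one_add_sqrt_inv_mul_mul (hA.trans_le hAB) M ε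
  simp only [mul_neg, ← sub_eq_add_neg] at hlowA
  intro f
  obtain ⟨hlow, hup⟩ := frame_bounds_of_isBesselSequence_sub hDA (fun f => (hframe f).1)
    (isBesselSequence_of_frame_bounds hA hframe) hd f
  rw [hsqrtD] at hlow hup
  rw [hlowA, hupB]
  exact ⟨hlow, hup⟩

/-- Proposition 3.5: cross-Gramian localization perturbation criterion. -/
theorem stmt_10 {H : Type*} [NormedAddCommGroup H] [InnerProductSpace ℂ H] [CompleteSpace H]
    (g gt F E : ℤ → H) (A B M ε : ℝ) (hA : 0 < A) (hAB : A ≤ B)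
    (hframe : ∀ f : H,
      A * ‖f‖ ^ 2 ≤ ∑' n : ℤ, ‖(inner ℂ f (F n) : ℂ)‖ ^ 2 ∧
      ∑' n : ℤ, ‖(inner ℂ f (F n) : ℂ)‖ ^ 2 ≤ B * ‖f‖ ^ 2)
    (hGram_row : ∀ x : ℤ, Summable (fun y : ℤ => ‖(inner ℂ (g x) (g y) : ℂ)‖) ∧
      ∑' y : ℤ, ‖(inner ℂ (g x) (g y) : ℂ)‖ ≤ M)
    (hGram_col : ∀ y : ℤ, Summable (fun x : ℤ => ‖(inner ℂ (g x) (g y) : ℂ)‖) ∧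
      ∑' x : ℤ, ‖(inner ℂ (g x) (g y) : ℂ)‖ ≤ M)
    (hdual : ∀ h : H, HasSum (fun x : ℤ => (inner ℂ h (gt x) : ℂ) • g x) h)
    (hpert_row : ∀ n : ℤ, Summable (fun x : ℤ => ‖(inner ℂ (E n - F n) (gt x) : ℂ)‖) ∧
      ∑' x : ℤ, ‖(inner ℂ (E n - F n) (gt x) : ℂ)‖ ≤ ε)
    (hpert_col : ∀ x : ℤ, Summable (fun n : ℤ => ‖(inner ℂ (E n - F n) (gt x) : ℂ)‖) ∧
      ∑' n : ℤ, ‖(inner ℂ (E n - F n) (gt x) : ℂ)‖ ≤ ε)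
    (hε0 : 0 < ε) (hεsmall : ε < (Real.sqrt (A⁻¹ * M))⁻¹) :
    ∀ f : H,
      A * (1 - Real.sqrt (A⁻¹ * M) * ε) ^ 2 * ‖f‖ ^ 2 ≤
        ∑' n : ℤ, ‖(inner ℂ f (E n) : ℂ)‖ ^ 2 ∧
      ∑' n : ℤ, ‖(inner ℂ f (E n) : ℂ)‖ ^ 2 ≤
        B * (1 + Real.sqrt (B⁻¹ * M) * ε) ^ 2 * ‖f‖ ^ 2 :=
  stmt_10_general g gt F E A B M ε hA hAB hframe hGram_row hGram_col hdual hpert_row hpert_col hε0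
    hεsmall
end

section
/- Let {f_n} be a frame atomic decomposition for a Banach space X with bounds A_p, B_p (i.e., A_p‖f‖ ≤ ‖(⟨f, f̃_n⟩)‖_{ℓ^p} ≤ B_p‖f‖ and f = Σ_n ⟨f, f̃_n⟩ f_n unconditionally), and suppose E = {e_n} satisfies ‖Σ_n c_n (e_n − f_n)‖_X ≤ ε‖c‖_{ℓ^p} for all finitely supported c, with ε B_p < 1. Then E is a frame atomic decomposition for X with bounds A_p(1 + ε B_p)⁻¹ and B_p(1 − ε B_p)⁻¹. -/
/-!
The map `D x = ∑ ⟨x, f̃ₙ⟩ (eₙ - fₙ)` is controlled by the perturbation hypothesis and the upper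
frame bound: `‖D x‖ ≤ ε Bₚ ‖x‖`. Since `ε Bₚ < 1`, the operator `S = 1 + D`, which sends `x` to
`∑ ⟨x, f̃ₙ⟩ eₙ`, is invertible by the Neumann series, with
`(1 + ε Bₚ)⁻¹ ‖x‖ ≤ ‖S⁻¹ x‖ ≤ (1 - ε Bₚ)⁻¹ ‖x‖`. The new analysis functionals are `f̃ₙ ∘ S⁻¹`:
expanding `S⁻¹ x` gives `x = S (S⁻¹ x) = ∑ ⟨S⁻¹ x, f̃ₙ⟩ eₙ`, and the frame bounds of `{f̃ₙ}` at
`S⁻¹ x` give the new bounds.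
-/

open Filter Topology

section Summability

variable {ι E : Type*} [NormedAddCommGroup E]

theorem summable_of_norm_sum_le_of_tendsto [CompleteSpace E] {v : ι → E} {a : ι → ℝ}
    (ha : Summable a) {φ : ℝ → ℝ} (hφ : Tendsto φ (𝓝 0) (𝓝 0))
    (h : ∀ s : Finset ι, ‖∑ n ∈ s, v n‖ ≤ φ (∑ n ∈ s, a n)) : Summable v := by
  refine summable_iff_vanishing_norm.2 fun r hr => ?_
  obtain ⟨δ, hδ, hφδ⟩ := Metric.tendsto_nhds_nhds.1 hφ r hr
  obtain ⟨s, hs⟩ := summable_iff_vanishing_norm.1 ha δ hδ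
  refine ⟨s, fun t ht => (h t).trans_lt ?_⟩
  have := hφδ (by simpa using hs t ht)
  simp only [dist_zero_right, Real.norm_eq_abs] at this
  exact (le_abs_self _).trans_lt this

theorem norm_tsum_le_of_norm_sum_le {v : ι → E} (hv : Summable v) {M : ℝ}
    (h : ∀ s : Finset ι, ‖∑ n ∈ s, v n‖ ≤ M) : ‖∑' n, v n‖ ≤ M :=
  le_of_tendsto' hv.hasSum.norm h

theorem summable_of_norm_sum_le_mul_rpow [CompleteSpace E] {v : ι → E} {a : ι → ℝ}
    (ha : Summable a) {C p : ℝ} (hp : 0 < p)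
    (h : ∀ s : Finset ι, ‖∑ n ∈ s, v n‖ ≤ C * (∑ n ∈ s, a n) ^ (1 / p)) : Summable v := by
  refine summable_of_norm_sum_le_of_tendsto (φ := fun t => C * t ^ (1 / p)) ha ?_ h
  have := ((Real.continuousAt_rpow_const 0 (1 / p) (Or.inr (by positivity))).tendsto).const_mul C
  rwa [Real.zero_rpow (by positivity), mul_zero] at this

theorem norm_tsum_le_mul_rpow_tsum {v : ι → E} {a : ι → ℝ} (hv : Summable v)
    (ha : Summable a) (ha₀ : ∀ n, 0 ≤ a n) {C p : ℝ} (hC : 0 ≤ C) (hp : 0 < p)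
    (h : ∀ s : Finset ι, ‖∑ n ∈ s, v n‖ ≤ C * (∑ n ∈ s, a n) ^ (1 / p)) :
    ‖∑' n, v n‖ ≤ C * (∑' n, a n) ^ (1 / p) :=
  norm_tsum_le_of_norm_sum_le hv fun s => (h s).trans <| by
    gcongr
    · exact s.sum_nonneg fun n _ => ha₀ n
    · exact ha.sum_le_tsum s fun n _ => ha₀ n

theorem summable_of_rpow_tsum_pos {a : ι → ℝ} {q : ℝ} (hq : q ≠ 0)
    (h : 0 < (∑' n, a n) ^ q) : Summable a := by
  by_contra hna
  rw [tsum_eq_zero_of_not_summable hna, Real.zero_rpow hq] at h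
  exact h.false

end Summability

section Operators

variable {ι 𝕜 X Y : Type*} [NontriviallyNormedField 𝕜] [NormedAddCommGroup X] [NormedSpace 𝕜 X]
  [NormedAddCommGroup Y] [NormedSpace 𝕜 Y]

noncomputable def tsumSmulLinearMap (φ : ι → X →L[𝕜] 𝕜) (w : ι → Y)
    (hs : ∀ x, Summable fun n => φ n x • w n) : X →ₗ[𝕜] Y where
  toFun x := ∑' n, φ n x • w n
  map_add' x y := by simpa only [map_add, add_smul] using (hs x).tsum_add (hs y)
  map_smul' c x := by
    simpa only [map_smul, smul_eq_mul, mul_smul, RingHom.id_apply] using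
      (hs x).tsum_const_smul c

theorem summable_norm_rpow_of_lower_bound (φ : ι → X →L[𝕜] 𝕜) {p A : ℝ} (hp : 0 < p)
    (hA : 0 < A) (h : ∀ x, A * ‖x‖ ≤ (∑' n, ‖φ n x‖ ^ p) ^ (1 / p)) (x : X) :
    Summable fun n => ‖φ n x‖ ^ p := by
  rcases eq_or_ne x 0 with rfl | hx
  · simp [Real.zero_rpow hp.ne']
  · -- `tsum` of a non-summable family is `0`, which the lower bound rules out.
    exact summable_of_rpow_tsum_pos (by positivity) <|
      (mul_pos hA (norm_pos_iff.2 hx)).trans_le (h x)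

theorem norm_add_apply_le {D : X →L[𝕜] X} {δ : ℝ} (hD : ‖D‖ ≤ δ) (y : X) :
    ‖y + D y‖ ≤ (1 + δ) * ‖y‖ :=
  calc ‖y + D y‖ ≤ ‖y‖ + ‖D‖ * ‖y‖ := norm_add_le_of_le le_rfl (D.le_opNorm y)
    _ ≤ (1 + δ) * ‖y‖ := by nlinarith [norm_nonneg y]

theorem le_norm_add_apply {D : X →L[𝕜] X} {δ : ℝ} (hD : ‖D‖ ≤ δ) (y : X) :
    (1 - δ) * ‖y‖ ≤ ‖y + D y‖ :=
  calc (1 - δ) * ‖y‖ ≤ ‖y‖ - ‖D‖ * ‖y‖ := by nlinarith [norm_nonneg y]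
    _ ≤ ‖y‖ - ‖D y‖ := by linarith [D.le_opNorm y]
    _ ≤ ‖y + D y‖ := norm_sub_le_norm_add _ _

theorem exists_rightInverse_one_add_of_norm_le [CompleteSpace X] {D : X →L[𝕜] X} {δ : ℝ}
    (hD : ‖D‖ ≤ δ) (hδ : δ < 1) : ∃ T : X →L[𝕜] X, (∀ x, T x + D (T x) = x) ∧
      ∀ x, (1 + δ)⁻¹ * ‖x‖ ≤ ‖T x‖ ∧ ‖T x‖ ≤ (1 - δ)⁻¹ * ‖x‖ := by
  set u := Units.oneSub (-D) (by rw [norm_neg]; linarith)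
  have hT : ∀ x, (↑u⁻¹ : X →L[𝕜] X) x + D ((↑u⁻¹ : X →L[𝕜] X) x) = x := fun x => by
    simpa [u, add_mul] using congr($(u.mul_inv) x)
  refine ⟨↑u⁻¹, hT, fun x => ⟨?_, ?_⟩⟩
  · rw [inv_mul_le_iff₀ (by linarith [(norm_nonneg D).trans hD])]
    simpa only [hT] using norm_add_apply_le hD ((↑u⁻¹ : X →L[𝕜] X) x)
  · rw [le_inv_mul_iff₀ (by linarith)]
    simpa only [hT] using le_norm_add_apply hD ((↑u⁻¹ : X →L[𝕜] X) x)

end Operators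

/-- Banach-space perturbation of frame atomic decompositions ([CH, Theorem 2.3]). -/
theorem stmt_16 {X : Type*} [NormedAddCommGroup X] [NormedSpace ℂ X] [CompleteSpace X]
    (f e : ℤ → X) (ft : ℤ → (X →L[ℂ] ℂ)) (p Ap Bp ε : ℝ)
    (hp : 1 ≤ p) (hAp : 0 < Ap) (hBp : 0 < Bp) (hε : 0 < ε)
    (hexp : ∀ x : X, HasSum (fun n : ℤ => ft n x • f n) x)
    (hnorm : ∀ x : X,
      Ap * ‖x‖ ≤ (∑' n : ℤ, ‖ft n x‖ ^ p) ^ (1 / p) ∧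
      (∑' n : ℤ, ‖ft n x‖ ^ p) ^ (1 / p) ≤ Bp * ‖x‖)
    (hpert : ∀ (F₀ : Finset ℤ) (c : ℤ → ℂ),
      ‖∑ n ∈ F₀, c n • (e n - f n)‖ ≤ ε * (∑ n ∈ F₀, ‖c n‖ ^ p) ^ (1 / p))
    (hsmall : ε * Bp < 1) :
    ∃ et : ℤ → (X →L[ℂ] ℂ),
      (∀ x : X, HasSum (fun n : ℤ => et n x • e n) x) ∧
      ∀ x : X,
        Ap * (1 + ε * Bp)⁻¹ * ‖x‖ ≤ (∑' n : ℤ, ‖et n x‖ ^ p) ^ (1 / p) ∧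
        (∑' n : ℤ, ‖et n x‖ ^ p) ^ (1 / p) ≤ Bp * (1 - ε * Bp)⁻¹ * ‖x‖ := by
  have hp₀ : 0 < p := one_pos.trans_le hp
  have hcoef := summable_norm_rpow_of_lower_bound ft hp₀ hAp fun x => (hnorm x).1
  have hD_summable (x : X) : Summable fun n => ft n x • (e n - f n) :=
    summable_of_norm_sum_le_mul_rpow (hcoef x) hp₀ fun s => hpert s _
  have hD_bound (x : X) : ‖∑' n, ft n x • (e n - f n)‖ ≤ ε * Bp * ‖x‖ := by
    rw [mul_assoc]
    exact (norm_tsum_le_mul_rpow_tsum (hD_summable x) (hcoef x) (fun n => by positivity)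
      hε.le hp₀ fun s => hpert s _).trans (by gcongr; exact (hnorm x).2)
  let D := (tsumSmulLinearMap ft (e - f) hD_summable).mkContinuous (ε * Bp) hD_bound
  have hD : ‖D‖ ≤ ε * Bp := LinearMap.mkContinuous_norm_le _ (by positivity) _
  obtain ⟨T, hT, hT_bounds⟩ := exists_rightInverse_one_add_of_norm_le hD hsmall
  refine ⟨fun n => (ft n).comp T, fun x => ?_, fun x => ⟨?_, ?_⟩⟩
  · convert (hexp (T x)).add (hD_summable (T x)).hasSum using 1
    · ext n
      rw [ContinuousLinearMap.comp_apply, ← smul_add, add_sub_cancel]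
    · exact (hT x).symm
  · calc Ap * (1 + ε * Bp)⁻¹ * ‖x‖ ≤ Ap * ‖T x‖ := by
          rw [mul_assoc]; gcongr; exact (hT_bounds x).1
      _ ≤ _ := (hnorm (T x)).1
  · calc _ ≤ Bp * ‖T x‖ := (hnorm (T x)).2
      _ ≤ Bp * (1 - ε * Bp)⁻¹ * ‖x‖ := by
          rw [mul_assoc]; gcongr; exact (hT_bounds x).2
end
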